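/- arXiv:2406.08986 — 11 statements merged into one kernel-verified Lean document; each statement's English description precedes it below -/
import Mathlib

section
/- Let A be a unital C*-algebra with unit e, ν ∈ (0,1), and a, b positive definite elements of A. Then the ν-weighted contraharmonic mean C_ν(a,b) = (1−ν)ν⁻¹ b + ν(1−ν)⁻¹ a − ((1−ν)a⁻¹ + νb⁻¹)⁻¹ is a positive element of A. -/
noncomputable def Cmean {A : Type*} [CStarAlgebra A] (ν : ℝ) (a b : A) : A :=
  (((1 - ν) / ν : ℝ) : ℂ) • b + ((ν / (1 - ν) : ℝ) : ℂ) • a -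
    Ring.inverse ((((1 - ν) : ℝ) : ℂ) • Ring.inverse a + ((ν : ℝ) : ℂ) • Ring.inverse b)

theorem stmt2 {A : Type*} [CStarAlgebra A] [PartialOrder A] [StarOrderedRing A]
    (ν : ℝ) (hν : ν ∈ Set.Ioo (0:ℝ) 1) (a b : A)
    (ha : 0 ≤ a) (ha' : IsUnit a) (hb : 0 ≤ b) (hb' : IsUnit b) :
    0 ≤ Cmean ν a b := by
  obtain ⟨hν0, hν1⟩ := hν
  have hν1' : (0:ℝ) < 1 - ν := by linarith
  -- units for a and b
  set u : Aˣ := ha'.unit with hu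
  set v : Aˣ := hb'.unit with hv
  have hua : (u : A) = a := ha'.unit_spec
  have hvb : (v : A) = b := hb'.unit_spec
  have hainv : Ring.inverse a = (↑u⁻¹ : A) := by rw [← hua, Ring.inverse_unit]
  have hbinv : Ring.inverse b = (↑v⁻¹ : A) := by rw [← hvb, Ring.inverse_unit]
  have huinv_nonneg : (0:A) ≤ ↑u⁻¹ := CFC.inv_nonneg_of_nonneg u (hua ▸ ha)
  have hvinv_nonneg : (0:A) ≤ ↑v⁻¹ := CFC.inv_nonneg_of_nonneg v (hvb ▸ hb)
  -- the element to invert, with real scalars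
  set x : A := (1 - ν) • (↑u⁻¹ : A) + ν • (↑v⁻¹ : A) with hx_def
  -- p := (1-ν) • u⁻¹ is a positive unit
  have hp_unit : IsUnit ((1 - ν) • (↑u⁻¹ : A)) := by
    rw [Algebra.smul_def]
    exact ((isUnit_iff_ne_zero.2 hν1'.ne').map (algebraMap ℝ A)).mul u⁻¹.isUnit
  have hq_unit : IsUnit (ν • (↑v⁻¹ : A)) := by
    rw [Algebra.smul_def]
    exact ((isUnit_iff_ne_zero.2 hν0.ne').map (algebraMap ℝ A)).mul v⁻¹.isUnit
  have hp_nonneg : (0:A) ≤ (1 - ν) • (↑u⁻¹ : A) := smul_nonneg hν1'.le huinv_nonneg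
  have hq_nonneg : (0:A) ≤ ν • (↑v⁻¹ : A) := smul_nonneg hν0.le hvinv_nonneg
  have hple : (1 - ν) • (↑u⁻¹ : A) ≤ x := le_add_of_nonneg_right hq_nonneg
  have hqle : ν • (↑v⁻¹ : A) ≤ x := le_add_of_nonneg_left hp_nonneg
  -- x is a unit
  have hx_unit : IsUnit x := CStarAlgebra.isUnit_of_le _ hple (hp_unit.isStrictlyPositive hp_nonneg)
  set w : Aˣ := hx_unit.unit with hw
  have hwx : (w : A) = x := hx_unit.unit_spec
  -- inverses of p and q as units
  set p : Aˣ := hp_unit.unit with hp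
  set q : Aˣ := hq_unit.unit with hq
  have hpx : (p : A) = (1 - ν) • (↑u⁻¹ : A) := hp_unit.unit_spec
  have hqx : (q : A) = ν • (↑v⁻¹ : A) := hq_unit.unit_spec
  have hpinv : (↑p⁻¹ : A) = (1 - ν)⁻¹ • a := by
    apply Units.inv_eq_of_mul_eq_one_right
    rw [hpx, smul_mul_smul_comm, ← hua, Units.inv_mul]
    rw [mul_inv_cancel₀ hν1'.ne', one_smul]
  have hqinv : (↑q⁻¹ : A) = ν⁻¹ • b := by
    apply Units.inv_eq_of_mul_eq_one_right
    rw [hqx, smul_mul_smul_comm, ← hvb, Units.inv_mul]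
    rw [mul_inv_cancel₀ hν0.ne', one_smul]
  -- antitonicity of inversion
  have h1 : (↑w⁻¹ : A) ≤ (1 - ν)⁻¹ • a := by
    rw [← hpinv]
    exact CStarAlgebra.inv_le_inv (hpx ▸ hp_nonneg) (by rw [hpx, hwx]; exact hple)
  have h2 : (↑w⁻¹ : A) ≤ ν⁻¹ • b := by
    rw [← hqinv]
    exact CStarAlgebra.inv_le_inv (hqx ▸ hq_nonneg) (by rw [hqx, hwx]; exact hqle)
  -- convex combination
  have hkey : (↑w⁻¹ : A) ≤ (ν / (1 - ν)) • a + ((1 - ν) / ν) • b := by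
    calc (↑w⁻¹ : A) = ν • (↑w⁻¹ : A) + (1 - ν) • (↑w⁻¹ : A) := by
          rw [← add_smul]; simp
      _ ≤ ν • ((1 - ν)⁻¹ • a) + (1 - ν) • (ν⁻¹ • b) :=
          add_le_add (smul_le_smul_of_nonneg_left h1 hν0.le)
            (smul_le_smul_of_nonneg_left h2 hν1'.le)
      _ = (ν / (1 - ν)) • a + ((1 - ν) / ν) • b := by
          rw [smul_smul, smul_smul, div_eq_mul_inv, div_eq_mul_inv]
  -- put everything together
  have hRinv : Ring.inverse ((((1 - ν) : ℝ) : ℂ) • Ring.inverse a + ((ν : ℝ) : ℂ) • Ring.inverse b)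
      = (↑w⁻¹ : A) := by
    rw [hainv, hbinv, Complex.coe_smul, Complex.coe_smul, ← hx_def, ← hwx, Ring.inverse_unit]
  rw [Cmean, hRinv, sub_nonneg, Complex.coe_smul, Complex.coe_smul, add_comm]
  exact hkey
end

section
/- Let A be a unital C*-algebra with unit e, ν ∈ (0,1), and a, b positive definite elements. For all x, y ∈ A with x + y = e, one has (1−ν)⁻¹(νa − x*ax) + ν⁻¹((1−ν)b − y*by) ≤ C_ν(a,b), where ≤ is the order on self-adjoint elements. -/
private lemma aux_ident {A : Type*} [Ring A] (c d ci di si x xs : A)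
    (hcci : c * ci = 1) (hcic : ci * c = 1) (hddi : d * di = 1) (hdid : di * d = 1)
    (hs : (ci + di) * si = 1) (hs' : si * (ci + di) = 1) :
    (xs - si * ci) * ((c + d) * (x - ci * si))
      = xs * (c * x) + (1 - xs) * (d * (1 - x)) - si := by
  have h1 : d * ci * si = d - si := by
    have h : d * ci * si = (d * (ci + di) - d * di) * si := by noncomm_ring
    rw [h, hddi, sub_mul, one_mul, mul_assoc, hs, mul_one]
  have key1 : (c + d) * (ci * si) = d := by
    have h : (c + d) * (ci * si) = (c * ci) * si + d * ci * si := by noncomm_ring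
    rw [h, hcci, one_mul, h1]
    abel
  have key2 : (si * ci) * (c + d) = d := by
    have h2 : si * (ci * d) = d - si := by
      have h : si * (ci * d) = si * ((ci + di) * d - di * d) := by noncomm_ring
      rw [h, hdid, mul_sub, ← mul_assoc, hs', one_mul, mul_one]
    have h : (si * ci) * (c + d) = si * (ci * c) + si * (ci * d) := by noncomm_ring
    rw [h, hcic, mul_one, h2]
    abel
  calc (xs - si * ci) * ((c + d) * (x - ci * si))
      = xs * ((c + d) * x) - xs * ((c + d) * (ci * si)) - ((si * ci) * (c + d)) * x
          + ((si * ci) * (c + d)) * (ci * si) := by noncomm_ring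
    _ = xs * ((c + d) * x) - xs * d - d * x + (d * ci) * si := by
          rw [key1, key2, mul_assoc d ci si]
    _ = xs * ((c + d) * x) - xs * d - d * x + (d - si) := by rw [h1]
    _ = xs * (c * x) + (1 - xs) * (d * (1 - x)) - si := by noncomm_ring

theorem stmt8 {A : Type*} [CStarAlgebra A] [PartialOrder A] [StarOrderedRing A]
    (ν : ℝ) (hν : ν ∈ Set.Ioo (0:ℝ) 1) (a b : A)
    (ha : 0 ≤ a) (ha' : IsUnit a) (hb : 0 ≤ b) (hb' : IsUnit b)
    (x y : A) (hxy : x + y = 1) :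
    ((((1 - ν)⁻¹ : ℝ)) : ℂ) • (((ν : ℝ) : ℂ) • a - star x * a * x) +
      (((ν⁻¹ : ℝ)) : ℂ) • ((((1 - ν) : ℝ) : ℂ) • b - star y * b * y) ≤ Cmean ν a b := by
  obtain ⟨hν0, hν1⟩ := hν
  have hr : (0:ℝ) < 1 - ν := by linarith
  have hcs : ∀ (r : ℝ) (m : A), ((r : ℂ) • m) = r • m := fun r m => by
    rw [← algebraMap_smul ℂ r m, Complex.coe_algebraMap]
  lift a to Aˣ using ha'
  lift b to Aˣ using hb'
  have hy : y = 1 - x := eq_sub_of_add_eq' hxy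
  -- inverses
  have hai : (0:A) ≤ ↑a⁻¹ := CFC.inv_nonneg_of_nonneg a ha
  have hbi : (0:A) ≤ ↑b⁻¹ := CFC.inv_nonneg_of_nonneg b hb
  set ci : A := (1 - ν) • (↑a⁻¹ : A) with hci_def
  set di : A := ν • (↑b⁻¹ : A) with hdi_def
  set c : A := (1 - ν)⁻¹ • (↑a : A) with hc_def
  set d : A := ν⁻¹ • (↑b : A) with hd_def
  have hcci : c * ci = 1 := by
    rw [hc_def, hci_def, smul_mul_smul_comm, inv_mul_cancel₀ hr.ne', Units.mul_inv, one_smul]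
  have hcic : ci * c = 1 := by
    rw [hc_def, hci_def, smul_mul_smul_comm, mul_inv_cancel₀ hr.ne', Units.inv_mul, one_smul]
  have hddi : d * di = 1 := by
    rw [hd_def, hdi_def, smul_mul_smul_comm, inv_mul_cancel₀ hν0.ne', Units.mul_inv, one_smul]
  have hdid : di * d = 1 := by
    rw [hd_def, hdi_def, smul_mul_smul_comm, mul_inv_cancel₀ hν0.ne', Units.inv_mul, one_smul]
  -- s is a unit
  have hci_nonneg : (0:A) ≤ ci := smul_nonneg hr.le hai
  have hdi_nonneg : (0:A) ≤ di := smul_nonneg hν0.le hbi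
  have hci_unit : IsUnit ci := by
    refine isUnit_iff_exists.mpr ⟨c, ?_, ?_⟩ <;> simp [hcic, hcci]
  have hs_unit : IsUnit (ci + di) :=
    CStarAlgebra.isUnit_of_le ci (le_add_of_nonneg_right hdi_nonneg) ⟨hci_nonneg, hci_unit⟩
  obtain ⟨us, hus⟩ := hs_unit
  set si : A := (↑us⁻¹ : A) with hsi_def
  have hssi : (ci + di) * si = 1 := by rw [← hus, hsi_def, Units.mul_inv]
  have hsis : si * (ci + di) = 1 := by rw [← hus, hsi_def, Units.inv_mul]
  have hs_nonneg : (0:A) ≤ (ci + di) := add_nonneg hci_nonneg hdi_nonneg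
  have hsi_nonneg : (0:A) ≤ si := by
    have := CFC.inv_nonneg_of_nonneg us (hus ▸ hs_nonneg)
    rwa [hsi_def]
  -- Ring.inverse of the sum equals si
  have hinv : Ring.inverse ((1 - ν) • (↑a⁻¹ : A) + ν • (↑b⁻¹ : A)) = si := by
    rw [← hci_def, ← hdi_def, ← hus, Ring.inverse_unit, hsi_def]
  -- self-adjointness
  have hsa : star (↑a : A) = ↑a := IsSelfAdjoint.of_nonneg ha
  have hsb : star (↑b : A) = ↑b := IsSelfAdjoint.of_nonneg hb
  have hsci : star ci = ci := IsSelfAdjoint.of_nonneg hci_nonneg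
  have hssi' : star si = si := IsSelfAdjoint.of_nonneg hsi_nonneg
  -- positivity of the conjugated element
  have hcd_nonneg : (0:A) ≤ c + d :=
    add_nonneg (smul_nonneg (by positivity) ha) (smul_nonneg (by positivity) hb)
  have hpos : (0:A) ≤ (star x - si * ci) * ((c + d) * (x - ci * si)) := by
    have h := star_left_conjugate_nonneg hcd_nonneg (x - ci * si)
    have hst : star (x - ci * si) = star x - si * ci := by
      rw [star_sub, star_mul, hsci, hssi']
    rwa [hst, mul_assoc] at h
  -- the key identity
  have hid := aux_ident c d ci di si x (star x) hcci hcic hddi hdid hssi hsis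
  -- finish
  rw [← sub_nonneg]
  have heq : Cmean ν (↑a) (↑b) -
      (((((1 - ν)⁻¹ : ℝ)) : ℂ) • (((ν : ℝ) : ℂ) • (↑a:A) - star x * ↑a * x) +
      (((ν⁻¹ : ℝ)) : ℂ) • ((((1 - ν) : ℝ) : ℂ) • (↑b:A) - star y * ↑b * y))
      = (star x - si * ci) * ((c + d) * (x - ci * si)) := by
    rw [hid]
    simp only [Cmean, Ring.inverse_unit, hcs, hinv, hy, star_sub, star_one]
    simp only [hc_def, hd_def, mul_sub, sub_mul, mul_one, one_mul, smul_sub, smul_smul,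
      smul_mul_assoc, mul_smul_comm, mul_assoc]
    module
  rw [heq]
  exact hpos
end

section
/- Let A be a unital C*-algebra with unit e, ν ∈ (0,1), and a, b positive definite elements. Setting z = ν⁻¹(1−ν)(a + ν⁻¹(1−ν)b)⁻¹ b and w = (a + ν⁻¹(1−ν)b)⁻¹ a, one has z + w = e and (1−ν)⁻¹(νa − z*az) + ν⁻¹((1−ν)b − w*bw) = C_ν(a,b). Hence the maximum of (1−ν)⁻¹(νa − x*ax) + ν⁻¹((1−ν)b − y*by) over x + y = e is attained and equals C_ν(a,b). -/
theorem stmt9 {A : Type*} [CStarAlgebra A] [PartialOrder A] [StarOrderedRing A]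
    (ν : ℝ) (hν : ν ∈ Set.Ioo (0:ℝ) 1) (a b : A)
    (ha : 0 ≤ a) (ha' : IsUnit a) (hb : 0 ≤ b) (hb' : IsUnit b) :
    (((ν⁻¹ * (1 - ν) : ℝ) : ℂ) •
        (Ring.inverse (a + ((ν⁻¹ * (1 - ν) : ℝ) : ℂ) • b) * b)) +
      Ring.inverse (a + ((ν⁻¹ * (1 - ν) : ℝ) : ℂ) • b) * a = 1 ∧
    (let z := ((ν⁻¹ * (1 - ν) : ℝ) : ℂ) •
        (Ring.inverse (a + ((ν⁻¹ * (1 - ν) : ℝ) : ℂ) • b) * b);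
     let w := Ring.inverse (a + ((ν⁻¹ * (1 - ν) : ℝ) : ℂ) • b) * a;
     ((((1 - ν)⁻¹ : ℝ)) : ℂ) • (((ν : ℝ) : ℂ) • a - star z * a * z) +
       (((ν⁻¹ : ℝ)) : ℂ) • ((((1 - ν) : ℝ) : ℂ) • b - star w * b * w) = Cmean ν a b) ∧
    IsGreatest {v : A | ∃ x y : A, x + y = 1 ∧
        v = ((((1 - ν)⁻¹ : ℝ)) : ℂ) • (((ν : ℝ) : ℂ) • a - star x * a * x) +
          (((ν⁻¹ : ℝ)) : ℂ) • ((((1 - ν) : ℝ) : ℂ) • b - star y * b * y)}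
      (Cmean ν a b) := by
  obtain ⟨hν0, hν1⟩ := hν
  have hν1' : (0:ℝ) < 1 - ν := by linarith
  simp only [Cmean, Complex.coe_smul]
  set μ : ℝ := ν⁻¹ * (1 - ν) with hμdef
  have hμ : 0 < μ := by positivity
  have hsb : star b = b := IsSelfAdjoint.of_nonneg hb
  have hsa : star a = a := IsSelfAdjoint.of_nonneg ha
  set s : A := a + μ • b with hsdef
  have hs : IsUnit s :=
    CStarAlgebra.isUnit_of_le a (le_add_of_nonneg_right (smul_nonneg hμ.le hb)) (ha'.isStrictlyPositive ha)
  set t : A := Ring.inverse s with htdef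
  have hts : t * s = 1 := Ring.inverse_mul_cancel s hs
  have hst : s * t = 1 := Ring.mul_inverse_cancel s hs
  have hss : star s = s := by rw [hsdef]; simp [hsa, hsb]
  have htt : star t = t := by
    have h1 : s * star t = 1 := by
      have := congrArg star hts
      simpa [star_mul, hss] using this
    calc star t = (t * s) * star t := by rw [hts, one_mul]
      _ = t * (s * star t) := by rw [mul_assoc]
      _ = t := by rw [h1, mul_one]
  have e1 : t * a = 1 - μ • (t * b) := by
    have h := hts
    rw [hsdef, mul_add, mul_smul_comm] at h
    exact eq_sub_of_add_eq h
  have e2 : a * t = 1 - μ • (b * t) := by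
    have h := hst
    rw [hsdef, add_mul, smul_mul_assoc] at h
    exact eq_sub_of_add_eq h
  have part1 : μ • (t * b) + t * a = 1 := by rw [e1]; module
  have h3 : a * (t * b) = b - μ • (b * (t * b)) := by
    rw [← mul_assoc, e2, sub_mul, one_mul, smul_mul_assoc, mul_assoc]
  have h4 : b * (t * a) = b - μ • (b * (t * b)) := by
    rw [e1, mul_sub, mul_one, mul_smul_comm]
  have hcomm : a * (t * b) = b * (t * a) := h3.trans h4.symm
  -- inverses of a and b
  have hiaa : Ring.inverse a * a = 1 := Ring.inverse_mul_cancel a ha'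
  have haia : a * Ring.inverse a = 1 := Ring.mul_inverse_cancel a ha'
  have hibb : Ring.inverse b * b = 1 := Ring.inverse_mul_cancel b hb'
  have hbib : b * Ring.inverse b = 1 := Ring.mul_inverse_cancel b hb'
  have hA : Ring.inverse a * (b * (t * a)) = t * b := by
    rw [← hcomm, ← mul_assoc, hiaa, one_mul]
  have hB : Ring.inverse b * (b * (t * a)) = t * a := by
    rw [← mul_assoc, hibb, one_mul]
  have hC : (b * (t * a)) * Ring.inverse a = b * t := by
    rw [mul_assoc, mul_assoc, haia, mul_one]
  have hD : (b * (t * a)) * Ring.inverse b = a * t := by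
    rw [← hcomm, mul_assoc, mul_assoc, hbib, mul_one]
  have hμν : (1 - ν) * ν⁻¹ = μ := by rw [hμdef]; ring
  have hνν : ν * ν⁻¹ = (1:ℝ) := mul_inv_cancel₀ hν0.ne'
  have hXY : ((1 - ν) • Ring.inverse a + ν • Ring.inverse b) * (ν⁻¹ • (b * (t * a))) = 1 := by
    rw [add_mul, smul_mul_assoc, smul_mul_assoc, mul_smul_comm, mul_smul_comm, smul_smul,
      smul_smul, hA, hB, hμν, hνν, one_smul]
    exact part1
  have hYX : (ν⁻¹ • (b * (t * a))) * ((1 - ν) • Ring.inverse a + ν • Ring.inverse b) = 1 := by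
    rw [mul_add, mul_smul_comm, mul_smul_comm, smul_mul_assoc, smul_mul_assoc, smul_smul,
      smul_smul, hC, hD]
    rw [hμν, hνν, one_smul, e2]
    module
  have hinv : Ring.inverse ((1 - ν) • Ring.inverse a + ν • Ring.inverse b)
      = ν⁻¹ • (b * (t * a)) := by
    have := Ring.inverse_unit (Units.mk _ _ hXY hYX)
    simpa using this
  -- compute star z, star w and the quadratic terms
  have hstarz : star (μ • (t * b)) = μ • (b * t) := by
    simp [star_smul, star_mul, htt, hsb]
  have hstarw : star (t * a) = a * t := by rw [star_mul, htt, hsa]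
  have hzz : star (μ • (t * b)) * a * (μ • (t * b))
      = (μ * μ) • (b * (t * b)) - (μ * μ * μ) • (b * (t * (b * (t * b)))) := by
    calc star (μ • (t * b)) * a * (μ • (t * b)) = (μ • (b * t)) * a * (μ • (t * b)) := by
          rw [hstarz]
      _ = (μ * μ) • ((b * (t * a)) * (t * b)) := by
          rw [smul_mul_assoc, smul_mul_assoc, mul_smul_comm, smul_smul, mul_assoc b t a]
      _ = (μ * μ) • ((b - μ • (b * (t * b))) * (t * b)) := by rw [h4]
      _ = (μ * μ) • (b * (t * b)) - (μ * μ * μ) • (b * (t * (b * (t * b)))) := by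
          rw [sub_mul, smul_mul_assoc, mul_assoc b (t * b) (t * b), mul_assoc t b (t * b),
            smul_sub, smul_smul]
  have hww : star (t * a) * b * (t * a)
      = b - (2 * μ) • (b * (t * b)) + (μ * μ) • (b * (t * (b * (t * b)))) := by
    calc star (t * a) * b * (t * a) = (a * (t * b)) * (t * a) := by
          rw [hstarw, mul_assoc a t b]
      _ = (b - μ • (b * (t * b))) * (t * a) := by rw [h3]
      _ = b * (t * a) - μ • (b * (t * (b * (t * a)))) := by
          rw [sub_mul, smul_mul_assoc, mul_assoc b (t * b) (t * a), mul_assoc t b (t * a)]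
      _ = (b - μ • (b * (t * b))) - μ • (b * (t * (b - μ • (b * (t * b))))) := by rw [h4]
      _ = b - (2 * μ) • (b * (t * b)) + (μ * μ) • (b * (t * (b * (t * b)))) := by
          simp only [mul_sub, smul_sub, mul_smul_comm, smul_smul]
          module
  have part2 : (1 - ν)⁻¹ • (ν • a - star (μ • (t * b)) * a * (μ • (t * b))) +
      ν⁻¹ • ((1 - ν) • b - star (t * a) * b * (t * a)) =
      ((1 - ν) / ν) • b + (ν / (1 - ν)) • a -
        Ring.inverse ((1 - ν) • Ring.inverse a + ν • Ring.inverse b) := by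
    rw [hinv, hzz, hww, h4]
    have hν0' : ν ≠ 0 := hν0.ne'
    have hν1'' : (1 - ν) ≠ 0 := hν1'.ne'
    rw [hμdef]
    match_scalars <;> (field_simp; try ring)
  refine ⟨part1, part2, ⟨μ • (t * b), t * a, part1, part2.symm⟩, ?_⟩
  -- upper bound
  rintro v ⟨x, y, hxy, rfl⟩
  rw [← part2]
  set z : A := μ • (t * b) with hzdef
  set w : A := t * a with hwdef
  have hy : y = w - (x - z) := by
    calc y = 1 - x := eq_sub_of_add_eq' hxy
      _ = (z + w) - x := by rw [part1]
      _ = w - (x - z) := by abel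
  have hx : x = z + (x - z) := by abel
  set u : A := x - z with hudef
  -- cross terms
  have hc1 : (1 - ν)⁻¹ • (a * z) = ν⁻¹ • (b * w) := by
    rw [hzdef, hwdef, mul_smul_comm, smul_smul, hcomm]
    congr 1
    rw [hμdef]
    field_simp
  have hc2 : (1 - ν)⁻¹ • (star z * a) = ν⁻¹ • (star w * b) := by
    rw [hzdef, hwdef, hstarz, hstarw, smul_mul_assoc, smul_smul, mul_assoc b t a,
      mul_assoc a t b, hcomm]
    congr 1
    rw [hμdef]
    field_simp
  have hc1' : (1 - ν)⁻¹ • (star u * (a * z)) = ν⁻¹ • (star u * (b * w)) := by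
    have := congrArg (fun m => star u * m) hc1
    simpa [mul_smul_comm] using this
  have hc2' : (1 - ν)⁻¹ • (star z * a * u) = ν⁻¹ • (star w * b * u) := by
    have := congrArg (fun m => m * u) hc2
    simpa [smul_mul_assoc] using this
  have keyEq : (1 - ν)⁻¹ • (ν • a - star (z + u) * a * (z + u)) +
      ν⁻¹ • ((1 - ν) • b - star (w - u) * b * (w - u)) +
      ((1 - ν)⁻¹ • (star u * a * u) + ν⁻¹ • (star u * b * u)) =
      ((1 - ν)⁻¹ • (ν • a - star z * a * z) + ν⁻¹ • ((1 - ν) • b - star w * b * w)) +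
      ((ν⁻¹ • (star u * (b * w)) - (1 - ν)⁻¹ • (star u * (a * z))) +
       (ν⁻¹ • (star w * b * u) - (1 - ν)⁻¹ • (star z * a * u))) := by
    simp only [star_add, star_sub, add_mul, mul_add, sub_mul, mul_sub, smul_add, smul_sub,
      mul_assoc]
    match_scalars <;> ring
  rw [hc1', hc2'] at keyEq
  simp only [sub_self, add_zero] at keyEq
  have hP : 0 ≤ (1 - ν)⁻¹ • (star u * a * u) + ν⁻¹ • (star u * b * u) :=
    add_nonneg (smul_nonneg (inv_nonneg.mpr hν1'.le) (star_left_conjugate_nonneg ha u))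
      (smul_nonneg (inv_nonneg.mpr hν0.le) (star_left_conjugate_nonneg hb u))
  calc (1 - ν)⁻¹ • (ν • a - star x * a * x) + ν⁻¹ • ((1 - ν) • b - star y * b * y)
      ≤ (1 - ν)⁻¹ • (ν • a - star x * a * x) + ν⁻¹ • ((1 - ν) • b - star y * b * y) +
        ((1 - ν)⁻¹ • (star u * a * u) + ν⁻¹ • (star u * b * u)) := le_add_of_nonneg_right hP
    _ = (1 - ν)⁻¹ • (ν • a - star z * a * z) + ν⁻¹ • ((1 - ν) • b - star w * b * w) := by
        rw [hx, hy]
        exact keyEq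
end

section
/- Let A be a unital C*-algebra, ν, μ ∈ (0,1), and a, b, c, d positive definite elements. Then C_ν(A_μ(a,b), A_μ(c,d)) ≤ A_μ(C_ν(a,c), C_ν(b,d)), where A_μ(x,y) = (1−μ)x + μy and C_ν is the ν-weighted contraharmonic mean. -/
section Helpers
variable {A : Type*} [CStarAlgebra A] [PartialOrder A] [StarOrderedRing A]

lemma myRinv_nonneg {x : A} (h : IsUnit x) (hx : 0 ≤ x) : 0 ≤ Ring.inverse x := by
  lift x to Aˣ using h
  rw [Ring.inverse_unit]; exact CFC.inv_nonneg_of_nonneg x hx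

lemma mySmul_isUnit {r : ℝ} (hr : r ≠ 0) {x : A} (h : IsUnit x) : IsUnit ((r:ℂ) • x) := by
  obtain ⟨u, rfl⟩ := h
  exact Units.isUnit ((Units.mk0 (r:ℂ) (by exact_mod_cast hr)) • u)

lemma myRinv_smul {r : ℝ} (hr : r ≠ 0) {x : A} (h : IsUnit x) :
    Ring.inverse ((r:ℂ) • x) = ((r⁻¹:ℝ):ℂ) • Ring.inverse x := by
  have hu : IsUnit ((r:ℂ) • x) := mySmul_isUnit hr h
  lift ((r:ℂ) • x) to Aˣ using hu with u hu2
  rw [Ring.inverse_unit]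
  refine Units.inv_eq_of_mul_eq_one_left ?_
  rw [hu2, smul_mul_smul_comm, Ring.inverse_mul_cancel x h, ← Complex.ofReal_mul,
    inv_mul_cancel₀ hr, Complex.ofReal_one, one_smul]

lemma mySmul_nonneg {r : ℝ} (hr : 0 ≤ r) {x : A} (hx : 0 ≤ x) : 0 ≤ (r:ℂ) • x := by
  rw [Complex.coe_smul]; exact smul_nonneg hr hx

lemma mySmul_le_smul {r : ℝ} (hr : 0 ≤ r) {x y : A} (hxy : x ≤ y) : (r:ℂ) • x ≤ (r:ℂ) • y := by
  rw [Complex.coe_smul, Complex.coe_smul]; exact smul_le_smul_of_nonneg_left hxy hr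

/-- The variational characterization of the harmonic mean. -/
lemma varlem {p q x y : A} (hp : 0 ≤ p) (hp' : IsUnit p) (hq : 0 ≤ q) (hq' : IsUnit q)
    (hxy : x + y = 1) :
    Ring.inverse (Ring.inverse p + Ring.inverse q) ≤ star x * p * x + star y * q * y := by
  set ip := Ring.inverse p with hip
  set iq := Ring.inverse q with hiq
  have bip : 0 ≤ ip := myRinv_nonneg hp' hp
  have biq : 0 ≤ iq := myRinv_nonneg hq' hq
  have hs' : IsUnit (ip + iq) :=
    CStarAlgebra.isUnit_of_le _ (le_add_of_nonneg_right biq) (hp'.ringInverse.isStrictlyPositive bip)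
  set s := ip + iq with hss
  set h := Ring.inverse s with hh
  have bh : 0 ≤ h := myRinv_nonneg hs' (add_nonneg bip biq)
  have hsa : star h = h := (IsSelfAdjoint.of_nonneg bh)
  have hipsa : star ip = ip := (IsSelfAdjoint.of_nonneg bip)
  have hiqsa : star iq = iq := (IsSelfAdjoint.of_nonneg biq)
  set x₀ := ip * h with hx₀
  set y₀ := iq * h with hy₀
  have hsum : x₀ + y₀ = 1 := by
    rw [hx₀, hy₀, ← add_mul, ← hss, hh, Ring.mul_inverse_cancel s hs']
  have h1 : star x₀ * p = h := by
    rw [hx₀, star_mul, hsa, hipsa, mul_assoc, hip, Ring.inverse_mul_cancel p hp', mul_one]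
  have h2 : p * x₀ = h := by
    rw [hx₀, ← mul_assoc, hip, Ring.mul_inverse_cancel p hp', one_mul]
  have h3 : star y₀ * q = h := by
    rw [hy₀, star_mul, hsa, hiqsa, mul_assoc, hiq, Ring.inverse_mul_cancel q hq', mul_one]
  have h4 : q * y₀ = h := by
    rw [hy₀, ← mul_assoc, hiq, Ring.mul_inverse_cancel q hq', one_mul]
  have e1 : star (x - x₀) * p * (x - x₀)
      = star x * p * x - star x * (p * x₀) - (star x₀ * p) * x + (star x₀ * p) * x₀ := by
    rw [star_sub]; noncomm_ring
  have e2 : star (y - y₀) * q * (y - y₀)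
      = star y * q * y - star y * (q * y₀) - (star y₀ * q) * y + (star y₀ * q) * y₀ := by
    rw [star_sub]; noncomm_ring
  rw [h1, h2] at e1
  rw [h3, h4] at e2
  have key : star x * p * x + star y * q * y - h
      = star (x - x₀) * p * (x - x₀) + star (y - y₀) * q * (y - y₀) := by
    rw [e1, e2]
    have c1 : star x * h + star y * h = h := by
      rw [← add_mul, ← star_add, hxy, star_one, one_mul]
    have c2 : h * x + h * y = h := by rw [← mul_add, hxy, mul_one]
    have c3 : h * x₀ + h * y₀ = h := by rw [← mul_add, hsum, mul_one]
    have : star x * p * x - star x * h - h * x + h * x₀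
        + (star y * q * y - star y * h - h * y + h * y₀)
        = star x * p * x + star y * q * y - (star x * h + star y * h) - (h * x + h * y)
          + (h * x₀ + h * y₀) := by abel
    rw [this, c1, c2, c3]; abel
  have pos : 0 ≤ star x * p * x + star y * q * y - h := by
    rw [key]
    exact add_nonneg (star_left_conjugate_nonneg hp _) (star_left_conjugate_nonneg hq _)
  exact sub_nonneg.mp pos

end Helpers

theorem stmt10 {A : Type*} [CStarAlgebra A] [PartialOrder A] [StarOrderedRing A]
    (ν μ : ℝ) (hν : ν ∈ Set.Ioo (0:ℝ) 1) (hμ : μ ∈ Set.Ioo (0:ℝ) 1) (a b c d : A)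
    (ha : 0 ≤ a) (ha' : IsUnit a) (hb : 0 ≤ b) (hb' : IsUnit b)
    (hc : 0 ≤ c) (hc' : IsUnit c) (hd : 0 ≤ d) (hd' : IsUnit d) :
    Cmean ν ((((1 - μ) : ℝ) : ℂ) • a + ((μ : ℝ) : ℂ) • b)
        ((((1 - μ) : ℝ) : ℂ) • c + ((μ : ℝ) : ℂ) • d) ≤
      (((1 - μ) : ℝ) : ℂ) • Cmean ν a c + ((μ : ℝ) : ℂ) • Cmean ν b d := by
  obtain ⟨hν0, hν1⟩ := hν
  obtain ⟨hμ0, hμ1⟩ := hμ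
  have hl : (0:ℝ) < 1 - ν := by linarith
  have hα : (0:ℝ) < 1 - μ := by linarith
  set m1 : A := ((1 - μ : ℝ):ℂ) • a + ((μ:ℝ):ℂ) • b with hm1
  set m2 : A := ((1 - μ : ℝ):ℂ) • c + ((μ:ℝ):ℂ) • d with hm2
  have bm1 : 0 ≤ m1 := add_nonneg (mySmul_nonneg hα.le ha) (mySmul_nonneg hμ0.le hb)
  have um1 : IsUnit m1 := CStarAlgebra.isUnit_of_le _
    (le_add_of_nonneg_right (mySmul_nonneg hμ0.le hb)) ((mySmul_isUnit hα.ne' ha').isStrictlyPositive (mySmul_nonneg hα.le ha))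
  have bm2 : 0 ≤ m2 := add_nonneg (mySmul_nonneg hα.le hc) (mySmul_nonneg hμ0.le hd)
  have um2 : IsUnit m2 := CStarAlgebra.isUnit_of_le _
    (le_add_of_nonneg_right (mySmul_nonneg hμ0.le hd)) ((mySmul_isUnit hα.ne' hc').isStrictlyPositive (mySmul_nonneg hα.le hc))
  set p : A := (((1-ν)⁻¹ : ℝ):ℂ) • m1 with hp
  set q : A := ((ν⁻¹ : ℝ):ℂ) • m2 with hq
  have bp : 0 ≤ p := mySmul_nonneg (by positivity) bm1
  have up : IsUnit p := mySmul_isUnit (by positivity) um1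
  have bq : 0 ≤ q := mySmul_nonneg (by positivity) bm2
  have uq : IsUnit q := mySmul_isUnit (by positivity) um2
  have hip : Ring.inverse p = ((1-ν : ℝ):ℂ) • Ring.inverse m1 := by
    rw [hp, myRinv_smul (by positivity) um1, inv_inv]
  have hiq : Ring.inverse q = ((ν : ℝ):ℂ) • Ring.inverse m2 := by
    rw [hq, myRinv_smul (by positivity) um2, inv_inv]
  have bip : 0 ≤ Ring.inverse p := myRinv_nonneg up bp
  have biq : 0 ≤ Ring.inverse q := myRinv_nonneg uq bq
  set s : A := Ring.inverse p + Ring.inverse q with hs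
  have us : IsUnit s := CStarAlgebra.isUnit_of_le _
    (le_add_of_nonneg_right biq) (up.ringInverse.isStrictlyPositive bip)
  have bs : 0 ≤ s := add_nonneg bip biq
  set H : A := Ring.inverse s with hH
  have bH : 0 ≤ H := myRinv_nonneg us bs
  have hHsa : star H = H := IsSelfAdjoint.of_nonneg bH
  set x : A := Ring.inverse p * H with hx
  set y : A := Ring.inverse q * H with hy
  have hxy : x + y = 1 := by
    rw [hx, hy, ← add_mul, ← hs, hH, Ring.mul_inverse_cancel s us]
  -- variational inequalities
  set p1 : A := (((1-ν)⁻¹ : ℝ):ℂ) • a with hp1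
  set q1 : A := ((ν⁻¹ : ℝ):ℂ) • c with hq1
  set p2 : A := (((1-ν)⁻¹ : ℝ):ℂ) • b with hp2
  set q2 : A := ((ν⁻¹ : ℝ):ℂ) • d with hq2
  have v1 : Ring.inverse (((1-ν:ℝ):ℂ) • Ring.inverse a + ((ν:ℝ):ℂ) • Ring.inverse c)
      ≤ star x * p1 * x + star y * q1 * y := by
    have := varlem (p := p1) (q := q1) (mySmul_nonneg (by positivity) ha)
      (mySmul_isUnit (by positivity) ha') (mySmul_nonneg (by positivity) hc)
      (mySmul_isUnit (by positivity) hc') hxy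
    rwa [hp1, hq1, myRinv_smul (by positivity) ha', myRinv_smul (by positivity) hc',
      inv_inv, inv_inv] at this
  have v2 : Ring.inverse (((1-ν:ℝ):ℂ) • Ring.inverse b + ((ν:ℝ):ℂ) • Ring.inverse d)
      ≤ star x * p2 * x + star y * q2 * y := by
    have := varlem (p := p2) (q := q2) (mySmul_nonneg (by positivity) hb)
      (mySmul_isUnit (by positivity) hb') (mySmul_nonneg (by positivity) hd)
      (mySmul_isUnit (by positivity) hd') hxy
    rwa [hp2, hq2, myRinv_smul (by positivity) hb', myRinv_smul (by positivity) hd',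
      inv_inv, inv_inv] at this
  -- combine
  have eqmix : ((1-μ:ℝ):ℂ) • (star x * p1 * x + star y * q1 * y)
      + ((μ:ℝ):ℂ) • (star x * p2 * x + star y * q2 * y)
      = star x * p * x + star y * q * y := by
    rw [hp1, hq1, hp2, hq2, hp, hq, hm1, hm2]
    simp only [smul_add, mul_add, add_mul, mul_smul_comm, smul_mul_assoc, smul_smul]
    module
  have hxsa : star x = H * Ring.inverse p := by
    rw [hx, star_mul, hHsa, IsSelfAdjoint.of_nonneg bip]
  have hysa : star y = H * Ring.inverse q := by
    rw [hy, star_mul, hHsa, IsSelfAdjoint.of_nonneg biq]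
  have eqH : star x * p * x + star y * q * y = H := by
    rw [hxsa, hysa, hx, hy]
    have e1 : H * Ring.inverse p * p * (Ring.inverse p * H)
        = H * (Ring.inverse p * p * Ring.inverse p) * H := by noncomm_ring
    have e2 : H * Ring.inverse q * q * (Ring.inverse q * H)
        = H * (Ring.inverse q * q * Ring.inverse q) * H := by noncomm_ring
    rw [e1, e2, Ring.inverse_mul_cancel p up, Ring.inverse_mul_cancel q uq, one_mul, one_mul]
    have e3 : H * Ring.inverse p * H + H * Ring.inverse q * H
        = H * ((Ring.inverse p + Ring.inverse q) * H) := by noncomm_ring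
    rw [e3, ← hs, hH, Ring.mul_inverse_cancel s us, mul_one]
  set H1 : A := Ring.inverse (((1-ν:ℝ):ℂ) • Ring.inverse a + ((ν:ℝ):ℂ) • Ring.inverse c) with hH1
  set H2 : A := Ring.inverse (((1-ν:ℝ):ℂ) • Ring.inverse b + ((ν:ℝ):ℂ) • Ring.inverse d) with hH2
  have hHineq : ((1-μ:ℝ):ℂ) • H1 + ((μ:ℝ):ℂ) • H2 ≤ H := by
    rw [hH1, hH2]
    calc _ ≤ ((1-μ:ℝ):ℂ) • (star x * p1 * x + star y * q1 * y)
        + ((μ:ℝ):ℂ) • (star x * p2 * x + star y * q2 * y) :=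
          add_le_add (mySmul_le_smul hα.le v1) (mySmul_le_smul hμ0.le v2)
      _ = H := by rw [eqmix, eqH]
  have hsgoal : ((1-ν:ℝ):ℂ) • Ring.inverse m1 + ((ν:ℝ):ℂ) • Ring.inverse m2 = s := by
    rw [hs, hip, hiq]
  simp only [Cmean]
  rw [hsgoal, ← hH, ← hH1, ← hH2]
  have lin : (((1 - ν) / ν : ℝ):ℂ) • m2 + ((ν / (1 - ν) : ℝ):ℂ) • m1
      = ((1-μ:ℝ):ℂ) • ((((1 - ν) / ν : ℝ):ℂ) • c + ((ν / (1 - ν) : ℝ):ℂ) • a)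
        + ((μ:ℝ):ℂ) • ((((1 - ν) / ν : ℝ):ℂ) • d + ((ν / (1 - ν) : ℝ):ℂ) • b) := by
    rw [hm1, hm2]; module
  have rhs_eq : ((1-μ:ℝ):ℂ) • ((((1 - ν) / ν : ℝ):ℂ) • c + ((ν / (1 - ν) : ℝ):ℂ) • a - H1)
      + ((μ:ℝ):ℂ) • ((((1 - ν) / ν : ℝ):ℂ) • d + ((ν / (1 - ν) : ℝ):ℂ) • b - H2)
      = (((1-μ:ℝ):ℂ) • ((((1 - ν) / ν : ℝ):ℂ) • c + ((ν / (1 - ν) : ℝ):ℂ) • a)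
        + ((μ:ℝ):ℂ) • ((((1 - ν) / ν : ℝ):ℂ) • d + ((ν / (1 - ν) : ℝ):ℂ) • b))
        - (((1-μ:ℝ):ℂ) • H1 + ((μ:ℝ):ℂ) • H2) := by
    rw [smul_sub, smul_sub]; abel
  rw [rhs_eq, lin]
  exact sub_le_sub_left hHineq _
end

section
/- Let A be a unital C*-algebra, ν, μ ∈ (0,1), and a, b positive definite elements. Then C_ν(a, (1−μ)a + μb) ≤ (1−μ)·((2ν² − 2ν + 1)/(ν − ν²))·a + μ·C_ν(a,b). -/
section Aux

variable {A : Type*} [CStarAlgebra A]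

lemma aux_smul_unit (r : ℝ) (hr : r ≠ 0) (u : Aˣ) : IsUnit (r • (u : A)) := by
  rw [Algebra.smul_def]
  exact ((isUnit_iff_ne_zero.mpr hr).map (algebraMap ℝ A)).mul u.isUnit

lemma aux_smul_inv (r : ℝ) (hr : r ≠ 0) (u : Aˣ) (w : Aˣ) (hw : (w : A) = r • (u : A)) :
    (↑w⁻¹ : A) = r⁻¹ • (↑u⁻¹ : A) := by
  have key : (r⁻¹ • (↑u⁻¹ : A)) * (w : A) = 1 := by
    rw [hw, smul_mul_assoc, mul_smul_comm, smul_smul, Units.inv_mul,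
      inv_mul_cancel₀ hr, one_smul]
  calc (↑w⁻¹ : A) = (r⁻¹ • (↑u⁻¹ : A) * ↑w) * ↑w⁻¹ := by rw [key, one_mul]
    _ = r⁻¹ • (↑u⁻¹ : A) := by rw [mul_assoc, Units.mul_inv, mul_one]

lemma aux_res (c d t s : Aˣ) (ht : (t : A) = ↑c + ↑d) (hs : (s : A) = ↑c⁻¹ + ↑d⁻¹) :
    (↑t⁻¹ : A) = ↑c⁻¹ - ↑c⁻¹ * ↑s⁻¹ * ↑c⁻¹ := by
  have h1 : (t : A) * ↑c⁻¹ = ↑d * ↑s := by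
    rw [ht, hs, add_mul, Units.mul_inv, mul_add, Units.mul_inv, add_comm]
  have key : (t : A) * (↑c⁻¹ - ↑c⁻¹ * ↑s⁻¹ * ↑c⁻¹) = 1 := by
    have h2 : (t : A) * (↑c⁻¹ - ↑c⁻¹ * ↑s⁻¹ * ↑c⁻¹)
        = ↑t * ↑c⁻¹ - (↑t * ↑c⁻¹) * ↑s⁻¹ * ↑c⁻¹ := by noncomm_ring
    rw [h2, h1, mul_assoc (↑d : A) (↑s : A), Units.mul_inv, mul_one, hs, mul_add,
      Units.mul_inv]
    abel
  calc (↑t⁻¹ : A) = ↑t⁻¹ * ((t : A) * (↑c⁻¹ - ↑c⁻¹ * ↑s⁻¹ * ↑c⁻¹)) := by rw [key, mul_one]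
    _ = ↑c⁻¹ - ↑c⁻¹ * ↑s⁻¹ * ↑c⁻¹ := by rw [← mul_assoc, Units.inv_mul, one_mul]

variable [PartialOrder A] [StarOrderedRing A]

lemma aux_quad (p : Aˣ) (hp : 0 ≤ (p : A)) (x : A) (hx : IsSelfAdjoint x) :
    x + x ≤ x * ↑p * x + ↑p⁻¹ := by
  have hp' : (0 : A) ≤ ↑p⁻¹ := CFC.inv_nonneg_of_nonneg p hp
  have h0 := star_left_conjugate_nonneg hp' ((p : A) * x - 1)
  rw [star_sub, star_mul, hx.star_eq, (IsSelfAdjoint.of_nonneg hp).star_eq, star_one] at h0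
  have h1 : (x * ↑p - 1) * (↑p⁻¹ : A) = x - ↑p⁻¹ := by
    rw [sub_mul, one_mul, mul_assoc, Units.mul_inv, mul_one]
  rw [h1] at h0
  have h2 : (x - (↑p⁻¹ : A)) * (↑p * x - 1) = x * ↑p * x - x - x + ↑p⁻¹ := by
    rw [sub_mul, mul_sub, mul_sub, mul_one, mul_one, ← mul_assoc (↑p⁻¹ : A) (↑p : A) x,
      Units.inv_mul, one_mul]
    noncomm_ring
  rw [h2] at h0
  rw [← sub_nonneg]
  convert h0 using 1
  abel

lemma aux_inv_convex (μ : ℝ) (hμ0 : 0 < μ) (hμ1 : μ < 1) (u v w : Aˣ)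
    (hu : 0 ≤ (u : A)) (hv : 0 ≤ (v : A))
    (hw : (w : A) = (1 - μ) • (u : A) + μ • (v : A)) :
    (↑w⁻¹ : A) ≤ (1 - μ) • (↑u⁻¹ : A) + μ • (↑v⁻¹ : A) := by
  have hμ1' : (0 : ℝ) ≤ 1 - μ := by linarith
  have hw0 : 0 ≤ (w : A) := by
    rw [hw]; exact add_nonneg (smul_nonneg hμ1' hu) (smul_nonneg hμ0.le hv)
  set x : A := ↑w⁻¹ with hxdef
  have hx0 : 0 ≤ x := CFC.inv_nonneg_of_nonneg w hw0
  have hxsa : IsSelfAdjoint x := .of_nonneg hx0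
  have h3 := add_le_add
    (smul_le_smul_of_nonneg_left (aux_quad u hu x hxsa) hμ1')
    (smul_le_smul_of_nonneg_left (aux_quad v hv x hxsa) hμ0.le)
  have hL : (1 - μ) • (x + x) + μ • (x + x) = x + x := by
    rw [← add_smul]; norm_num
  have hmid : (1 - μ) • (x * ↑u * x) + μ • (x * ↑v * x) = x := by
    have e1 : (1 - μ) • (x * ↑u * x) + μ • (x * ↑v * x)
        = x * ((1 - μ) • (u : A) + μ • ↑v) * x := by
      simp only [mul_add, add_mul, mul_smul_comm, smul_mul_assoc]
    rw [e1, ← hw, hxdef, mul_assoc, Units.mul_inv, mul_one]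
  have hR : (1 - μ) • (x * ↑u * x + ↑u⁻¹) + μ • (x * ↑v * x + ↑v⁻¹)
      = x + ((1 - μ) • (↑u⁻¹ : A) + μ • ↑v⁻¹) := by
    rw [smul_add, smul_add, add_add_add_comm, hmid]
  rw [hL, hR] at h3
  exact le_of_add_le_add_left h3

end Aux

section MainAux

variable {A : Type*} [CStarAlgebra A]

lemma aux_cmean (ν : ℝ) (u v w : Aˣ)
    (hw : (w : A) = (1 - ν) • (↑u⁻¹ : A) + ν • (↑v⁻¹ : A)) :
    Cmean ν (u : A) (v : A)
      = ((1 - ν) / ν) • (v : A) + (ν / (1 - ν)) • (u : A) - ↑w⁻¹ := by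
  unfold Cmean
  rw [Complex.coe_smul, Complex.coe_smul, Complex.coe_smul, Complex.coe_smul,
    Ring.inverse_unit, Ring.inverse_unit, ← hw, Ring.inverse_unit]

end MainAux

theorem stmt12 {A : Type*} [CStarAlgebra A] [PartialOrder A] [StarOrderedRing A]
    (ν μ : ℝ) (hν : ν ∈ Set.Ioo (0:ℝ) 1) (hμ : μ ∈ Set.Ioo (0:ℝ) 1) (a b : A)
    (ha : 0 ≤ a) (ha' : IsUnit a) (hb : 0 ≤ b) (hb' : IsUnit b) :
    Cmean ν a ((((1 - μ) : ℝ) : ℂ) • a + ((μ : ℝ) : ℂ) • b) ≤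
      (((1 - μ) * ((2 * ν ^ 2 - 2 * ν + 1) / (ν - ν ^ 2)) : ℝ) : ℂ) • a +
        ((μ : ℝ) : ℂ) • Cmean ν a b := by
  obtain ⟨hν0, hν1⟩ := hν
  obtain ⟨hμ0, hμ1⟩ := hμ
  have hν1' : (0 : ℝ) < 1 - ν := by linarith
  have hμ1' : (0 : ℝ) < 1 - μ := by linarith
  lift a to Aˣ using ha'
  lift b to Aˣ using hb'
  have hai : (0 : A) ≤ ↑a⁻¹ := CFC.inv_nonneg_of_nonneg a ha
  have hbi : (0 : A) ≤ ↑b⁻¹ := CFC.inv_nonneg_of_nonneg b hb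
  -- the unit y = (1-μ)a + μb
  have hyu : IsUnit ((1 - μ) • (a : A) + μ • (b : A)) :=
    CStarAlgebra.isUnit_of_le _
      (le_add_of_nonneg_right (smul_nonneg hμ0.le hb))
      ((aux_smul_unit _ hμ1'.ne' a).isStrictlyPositive (smul_nonneg hμ1'.le ha))
  set y : Aˣ := hyu.unit with hydef
  have hy : (y : A) = (1 - μ) • (a : A) + μ • (b : A) := hyu.unit_spec
  have hy0 : 0 ≤ (y : A) := by
    rw [hy]; exact add_nonneg (smul_nonneg hμ1'.le ha) (smul_nonneg hμ0.le hb)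
  have hyi : (0 : A) ≤ ↑y⁻¹ := CFC.inv_nonneg_of_nonneg y hy0
  -- the unit c = (1-ν) a⁻¹
  have hcu : IsUnit ((1 - ν) • (↑a⁻¹ : A)) := aux_smul_unit _ hν1'.ne' a⁻¹
  set c : Aˣ := hcu.unit with hcdef
  have hc : (c : A) = (1 - ν) • (↑a⁻¹ : A) := hcu.unit_spec
  have hc0 : 0 ≤ (c : A) := by rw [hc]; exact smul_nonneg hν1'.le hai
  have hcinv : (↑c⁻¹ : A) = (1 - ν)⁻¹ • (a : A) := by
    have := aux_smul_inv (1 - ν) hν1'.ne' a⁻¹ c hc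
    rwa [inv_inv] at this
  have hci0 : 0 ≤ (↑c⁻¹ : A) := CFC.inv_nonneg_of_nonneg c hc0
  -- units t_z = c + ν z⁻¹ and d_z = ν z⁻¹, s_z = c⁻¹ + ν⁻¹ z  for z = y, b
  have mkT : ∀ z : Aˣ, 0 ≤ (z : A) → IsUnit ((c : A) + ν • (↑z⁻¹ : A)) := fun z hz =>
    CStarAlgebra.isUnit_of_le _
      (le_add_of_nonneg_right (smul_nonneg hν0.le (CFC.inv_nonneg_of_nonneg z hz)))
      (c.isUnit.isStrictlyPositive hc0)
  have mkS : ∀ z : Aˣ, 0 ≤ (z : A) → IsUnit ((↑c⁻¹ : A) + ν⁻¹ • (z : A)) := fun z hz =>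
    CStarAlgebra.isUnit_of_le _
      (le_add_of_nonneg_right (smul_nonneg (by positivity) hz))
      (c⁻¹.isUnit.isStrictlyPositive hci0)
  set ty : Aˣ := (mkT y hy0).unit with htydef
  have hty : (ty : A) = (c : A) + ν • (↑y⁻¹ : A) := (mkT y hy0).unit_spec
  set tb : Aˣ := (mkT b hb).unit with htbdef
  have htb : (tb : A) = (c : A) + ν • (↑b⁻¹ : A) := (mkT b hb).unit_spec
  set sy : Aˣ := (mkS y hy0).unit with hsydef
  have hsy : (sy : A) = (↑c⁻¹ : A) + ν⁻¹ • (y : A) := (mkS y hy0).unit_spec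
  set sa : Aˣ := (mkS a ha).unit with hsadef
  have hsa : (sa : A) = (↑c⁻¹ : A) + ν⁻¹ • (a : A) := (mkS a ha).unit_spec
  set sb : Aˣ := (mkS b hb).unit with hsbdef
  have hsb : (sb : A) = (↑c⁻¹ : A) + ν⁻¹ • (b : A) := (mkS b hb).unit_spec
  -- d units and resolvent identities
  have res : ∀ (z t s : Aˣ), 0 ≤ (z : A) → (t : A) = (c : A) + ν • (↑z⁻¹ : A) →
      (s : A) = (↑c⁻¹ : A) + ν⁻¹ • (z : A) →
      (↑t⁻¹ : A) = ↑c⁻¹ - ↑c⁻¹ * ↑s⁻¹ * ↑c⁻¹ := by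
    intro z t s hz ht hs
    have hdu : IsUnit (ν • (↑z⁻¹ : A)) := aux_smul_unit _ hν0.ne' z⁻¹
    have hd : (hdu.unit : A) = ν • (↑z⁻¹ : A) := hdu.unit_spec
    have hdinv : (↑hdu.unit⁻¹ : A) = ν⁻¹ • (z : A) := by
      have := aux_smul_inv ν hν0.ne' z⁻¹ hdu.unit hd
      rwa [inv_inv] at this
    exact aux_res c hdu.unit t s (by rw [ht, hd]) (by rw [hs, hdinv])
  have resy := res y ty sy hy0 hty hsy
  have resb := res b tb sb hb htb hsb
  -- sa⁻¹ : note ta = a⁻¹ since c + ν a⁻¹ = a⁻¹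
  have resa : (↑a : A) = ↑c⁻¹ - ↑c⁻¹ * ↑sa⁻¹ * ↑c⁻¹ := by
    have h : ((a⁻¹ : Aˣ) : A) = (c : A) + ν • (↑a⁻¹ : A) := by
      rw [hc, ← add_smul]
      norm_num
    have := res a a⁻¹ sa ha h hsa
    rwa [inv_inv] at this
  -- convexity of inverse applied to sy = (1-μ) sa + μ sb
  have hsyc : (sy : A) = (1 - μ) • (sa : A) + μ • (sb : A) := by
    rw [hsy, hsa, hsb, hy]
    match_scalars <;> ring
  have hsa0 : 0 ≤ (sa : A) := by
    rw [hsa]; exact add_nonneg hci0 (smul_nonneg (by positivity) ha)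
  have hsb0 : 0 ≤ (sb : A) := by
    rw [hsb]; exact add_nonneg hci0 (smul_nonneg (by positivity) hb)
  have hconv : (↑sy⁻¹ : A) ≤ (1 - μ) • (↑sa⁻¹ : A) + μ • (↑sb⁻¹ : A) :=
    aux_inv_convex μ hμ0 hμ1 sa sb sy hsa0 hsb0 hsyc
  -- conjugate by c⁻¹
  have hcsa : IsSelfAdjoint (↑c⁻¹ : A) := .of_nonneg hci0
  have hconj : (↑c⁻¹ : A) * ↑sy⁻¹ * ↑c⁻¹
      ≤ (↑c⁻¹ : A) * ((1 - μ) • (↑sa⁻¹ : A) + μ • (↑sb⁻¹ : A)) * ↑c⁻¹ :=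
    hcsa.conjugate_le_conjugate hconv
  -- key concavity inequality
  have key : (1 - μ) • (↑a : A) + μ • (↑tb⁻¹ : A) ≤ (↑ty⁻¹ : A) := by
    rw [resy, resb, resa]
    have hrhs : (↑c⁻¹ : A) * ((1 - μ) • (↑sa⁻¹ : A) + μ • (↑sb⁻¹ : A)) * ↑c⁻¹
        = (1 - μ) • ((↑c⁻¹ : A) * ↑sa⁻¹ * ↑c⁻¹) + μ • ((↑c⁻¹ : A) * ↑sb⁻¹ * ↑c⁻¹) := by
      simp only [mul_add, add_mul, mul_smul_comm, smul_mul_assoc]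
    rw [hrhs] at hconj
    calc (1 - μ) • ((↑c⁻¹ : A) - ↑c⁻¹ * ↑sa⁻¹ * ↑c⁻¹)
          + μ • ((↑c⁻¹ : A) - ↑c⁻¹ * ↑sb⁻¹ * ↑c⁻¹)
        = ↑c⁻¹ - ((1 - μ) • ((↑c⁻¹ : A) * ↑sa⁻¹ * ↑c⁻¹)
            + μ • ((↑c⁻¹ : A) * ↑sb⁻¹ * ↑c⁻¹)) := by module
      _ ≤ ↑c⁻¹ - (↑c⁻¹ : A) * ↑sy⁻¹ * ↑c⁻¹ := by
          exact sub_le_sub_left hconj _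
  -- rewrite the goal using Cmean equalities
  have e1 : ((((1 - μ) : ℝ) : ℂ) • (a : A) + ((μ : ℝ) : ℂ) • (b : A)) = (y : A) := by
    rw [Complex.coe_smul, Complex.coe_smul, hy]
  rw [e1, aux_cmean ν a y ty (by rw [hty, hc]), aux_cmean ν a b tb (by rw [htb, hc]),
    Complex.coe_smul, Complex.coe_smul]
  rw [← sub_nonneg]
  have iden : (((1 - μ) * ((2 * ν ^ 2 - 2 * ν + 1) / (ν - ν ^ 2))) • (a : A) +
        μ • (((1 - ν) / ν) • (b : A) + (ν / (1 - ν)) • (a : A) - ↑tb⁻¹)) -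
      (((1 - ν) / ν) • (y : A) + (ν / (1 - ν)) • (a : A) - ↑ty⁻¹)
      = (↑ty⁻¹ : A) - ((1 - μ) • (↑a : A) + μ • (↑tb⁻¹ : A)) + (1 - μ) • (↑a : A) := by
    have hd1 : ν ≠ 0 := hν0.ne'
    have hd2 : (1:ℝ) - ν ≠ 0 := hν1'.ne'
    have hd3 : ν - ν ^ 2 ≠ 0 := by nlinarith
    rw [hy]
    match_scalars <;> field_simp <;> ring
  rw [iden]
  have h2 : (0 : A) ≤ (↑ty⁻¹ : A) - ((1 - μ) • (↑a : A) + μ • (↑tb⁻¹ : A)) :=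
    sub_nonneg.mpr key
  exact add_nonneg h2 (smul_nonneg hμ1'.le ha)
end

section
/- Let A be a unital C*-algebra, ν ∈ (0,1), a, b positive definite elements, and φ a non-zero positive linear functional on A. Then C_ν(φ(a), φ(b)) ≤ φ(C_ν(a,b)), where on the left C_ν is the scalar ν-weighted contraharmonic mean of the positive reals φ(a), φ(b). -/
open scoped ComplexOrder NNReal

private lemma ring_inverse_eq' {A : Type*} [Ring A] {y z : A} (h1 : y * z = 1)
    (h2 : z * y = 1) : Ring.inverse y = z := by
  have : Ring.inverse ((⟨y, z, h1, h2⟩ : Aˣ) : A) = ((⟨y, z, h1, h2⟩ : Aˣ)⁻¹ : Aˣ) :=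
    Ring.inverse_unit _
  exact this

/-- The key operator inequality: if the scalar inequality `(s + r/t)⁻¹ ≤ l + m t` holds for all
`t > 0`, then `(s • a⁻¹ + r • b⁻¹)⁻¹ ≤ l • a + m • b`. -/
private lemma key_op_ineq {A : Type*} [CStarAlgebra A] [PartialOrder A] [StarOrderedRing A]
    {a b : A} (ha : 0 ≤ a) (ha' : IsUnit a) (hb : 0 ≤ b) (hb' : IsUnit b)
    {s r l m : ℝ} (hs : 0 < s) (hr : 0 < r)
    (hlm : ∀ t : ℝ, 0 < t → (s + r * t⁻¹)⁻¹ ≤ l + m * t) :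
    Ring.inverse (s • Ring.inverse a + r • Ring.inverse b) ≤ l • a + m • b := by
  have hsp : 0 ∉ spectrum ℝ≥0 a := spectrum.zero_notMem ℝ≥0 ha'
  set e : A := a ^ ((1:ℝ)/2) with he_def
  set e' : A := a ^ (-((1:ℝ)/2)) with he'_def
  have he0 : 0 ≤ e := CFC.rpow_nonneg
  have he'0 : 0 ≤ e' := CFC.rpow_nonneg
  have hesa : IsSelfAdjoint e := .of_nonneg he0
  have he'sa : IsSelfAdjoint e' := .of_nonneg he'0
  have hee' : e * e' = 1 := CFC.rpow_mul_rpow_neg _ (ha'.isStrictlyPositive ha)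
  have he'e : e' * e = 1 := CFC.rpow_neg_mul_rpow _ (ha'.isStrictlyPositive ha)
  have hee : e * e = a := by
    rw [he_def, ← CFC.rpow_add ha']
    norm_num
    exact CFC.rpow_one a
  set ia : A := Ring.inverse a with hia_def
  set ib : A := Ring.inverse b with hib_def
  have he'e' : e' * e' = ia := by
    symm; rw [hia_def]
    apply ring_inverse_eq'
    · calc a * (e' * e') = e * ((e * e') * e') := by rw [← hee]; simp only [mul_assoc]
        _ = 1 := by rw [hee', one_mul, hee']
    · calc (e' * e') * a = e' * ((e' * e) * e) := by rw [← hee]; simp only [mul_assoc]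
        _ = 1 := by rw [he'e, one_mul, he'e]
  -- the conjugated element c
  set c : A := e' * b * e' with hc_def
  have hc0 : 0 ≤ c := by
    have := star_left_conjugate_nonneg hb e'
    rwa [he'sa.star_eq] at this
  have hcsa : IsSelfAdjoint c := .of_nonneg hc0
  have hue' : IsUnit e' := ⟨⟨e', e, he'e, hee'⟩, rfl⟩
  have hcu : IsUnit c := (hue'.mul hb').mul hue'
  have hspec : ∀ t ∈ spectrum ℝ c, 0 < t := by
    intro t ht
    refine (spectrum_nonneg_of_nonneg hc0 ht).lt_of_ne' ?_
    intro h
    exact spectrum.zero_notMem ℝ hcu (h ▸ ht)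
  have hspec' : spectrum ℝ c ⊆ {(0:ℝ)}ᶜ := fun t ht h0 => by
    simp only [Set.mem_singleton_iff] at h0
    exact (hspec t ht).ne' h0
  have hbib : b * ib = 1 := Ring.mul_inverse_cancel b hb'
  have hibb : ib * b = 1 := Ring.inverse_mul_cancel b hb'
  -- inverse of c
  set ic : A := Ring.inverse c with hic_def
  have hic : ic = e * ib * e := by
    apply ring_inverse_eq'
    · calc c * (e * ib * e) = e' * (b * ((e' * e) * (ib * e))) := by
            rw [hc_def]; simp only [mul_assoc]
      _ = 1 := by rw [he'e, one_mul, ← mul_assoc b ib e, hbib, one_mul, he'e]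
    · calc (e * ib * e) * c = e * (ib * ((e * e') * (b * e'))) := by
            rw [hc_def]; simp only [mul_assoc]
      _ = 1 := by rw [hee', one_mul, ← mul_assoc ib b e', hibb, one_mul, hee']
  -- continuity facts
  have hcont_inv : ContinuousOn (fun t : ℝ => t⁻¹) (spectrum ℝ c) :=
    continuousOn_inv₀.mono hspec'
  have hcontG₀ : ContinuousOn (fun t : ℝ => s + r * t⁻¹) (spectrum ℝ c) :=
    continuousOn_const.add (continuousOn_const.mul hcont_inv)
  have hG₀pos : ∀ t ∈ spectrum ℝ c, 0 < s + r * t⁻¹ := by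
    intro t ht
    have := hspec t ht
    positivity
  have hcontF : ContinuousOn (fun t : ℝ => (s + r * t⁻¹)⁻¹) (spectrum ℝ c) :=
    hcontG₀.inv₀ fun t ht => (hG₀pos t ht).ne'
  -- express s•1 + r•ic as cfc
  have hg1 : cfc (fun t : ℝ => t * t⁻¹) c = c * cfc (fun t : ℝ => t⁻¹) c := by
    rw [cfc_mul (fun t : ℝ => t) (fun t : ℝ => t⁻¹) c continuousOn_id hcont_inv, cfc_id' ℝ c hcsa]
  have hg1' : cfc (fun t : ℝ => t⁻¹ * t) c = cfc (fun t : ℝ => t⁻¹) c * c := by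
    rw [cfc_mul (fun t : ℝ => t⁻¹) (fun t : ℝ => t) c hcont_inv continuousOn_id, cfc_id' ℝ c hcsa]
  have h3 : Ring.inverse c = cfc (fun t : ℝ => t⁻¹) c := by
    apply ring_inverse_eq'
    · rw [← hg1, cfc_congr (g := fun _ : ℝ => 1) fun t ht => mul_inv_cancel₀ ((hspec t ht).ne')]
      exact cfc_const_one ℝ c hcsa
    · rw [← hg1', cfc_congr (g := fun _ : ℝ => 1) fun t ht => inv_mul_cancel₀ ((hspec t ht).ne')]
      exact cfc_const_one ℝ c hcsa
  have hX : cfc (fun t : ℝ => s + r * t⁻¹) c = s • (1:A) + r • ic := by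
    have hX1 : cfc (fun t : ℝ => s + r * t⁻¹) c
        = algebraMap ℝ A s + cfc (fun t : ℝ => r * t⁻¹) c :=
      cfc_const_add s (fun t : ℝ => r * t⁻¹) c (continuousOn_const.mul hcont_inv) hcsa
    have hX2 : cfc (fun t : ℝ => r * t⁻¹) c = r • cfc (fun t : ℝ => t⁻¹) c :=
      cfc_const_mul r (fun t : ℝ => t⁻¹) c hcont_inv
    rw [hX1, hX2, hic_def, h3, Algebra.algebraMap_eq_smul_one]
  set X : A := s • (1:A) + r • ic with hX_def
  have hmul1 : cfc (fun t : ℝ => s + r * t⁻¹) c * cfc (fun t : ℝ => (s + r * t⁻¹)⁻¹) c = 1 := by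
    rw [← cfc_mul _ _ c hcontG₀ hcontF,
      cfc_congr (g := fun _ : ℝ => 1) fun t ht => mul_inv_cancel₀ ((hG₀pos t ht).ne')]
    exact cfc_const_one ℝ c hcsa
  have hmul2 : cfc (fun t : ℝ => (s + r * t⁻¹)⁻¹) c * cfc (fun t : ℝ => s + r * t⁻¹) c = 1 := by
    rw [← cfc_mul _ _ c hcontF hcontG₀,
      cfc_congr (g := fun _ : ℝ => 1) fun t ht => inv_mul_cancel₀ ((hG₀pos t ht).ne')]
    exact cfc_const_one ℝ c hcsa
  rw [hX] at hmul1 hmul2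
  have hXu : IsUnit X := ⟨⟨X, _, hmul1, hmul2⟩, rfl⟩
  have hiX : Ring.inverse X = cfc (fun t : ℝ => (s + r * t⁻¹)⁻¹) c :=
    ring_inverse_eq' hmul1 hmul2
  -- the cfc inequality
  have hFG : cfc (fun t : ℝ => (s + r * t⁻¹)⁻¹) c ≤ cfc (fun t : ℝ => l + m * t) c :=
    cfc_mono (fun t ht => hlm t (hspec t ht)) hcontF
      (continuousOn_const.add (continuousOn_const.mul continuousOn_id))
  have hGeq : cfc (fun t : ℝ => l + m * t) c = l • (1:A) + m • c := by
    have hG1 : cfc (fun t : ℝ => l + m * t) c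
        = algebraMap ℝ A l + cfc (fun t : ℝ => m * t) c :=
      cfc_const_add l (fun t : ℝ => m * t) c (continuousOn_const.mul continuousOn_id) hcsa
    have hG2 : cfc (fun t : ℝ => m * t) c = m • c := cfc_const_mul_id m c hcsa
    rw [hG1, hG2, Algebra.algebraMap_eq_smul_one]
  have hkey : Ring.inverse X ≤ l • (1:A) + m • c := by
    rw [hiX, ← hGeq]; exact hFG
  -- conjugate by e
  have hconj := star_left_conjugate_le_conjugate hkey e
  rw [hesa.star_eq] at hconj
  -- identify the two sides
  have hXx : Ring.inverse (s • ia + r • ib) = e * Ring.inverse X * e := by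
    have hxe : e' * X * e' = s • ia + r • ib := by
      rw [hX_def, hic]
      simp only [mul_add, add_mul, mul_smul_comm, smul_mul_assoc, mul_one]
      congr 1
      · rw [he'e']
      · congr 1
        calc e' * (e * ib * e) * e' = e' * (e * (ib * (e * e'))) := by simp only [mul_assoc]
          _ = ib := by rw [hee', mul_one, ← mul_assoc e' e ib, he'e, one_mul]
    apply ring_inverse_eq'
    · rw [← hxe]
      calc (e' * X * e') * (e * Ring.inverse X * e)
          = e' * (X * ((e' * e) * (Ring.inverse X * e))) := by simp only [mul_assoc]
        _ = 1 := by
            rw [he'e, one_mul, ← mul_assoc X (Ring.inverse X) e,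
              Ring.mul_inverse_cancel X hXu, one_mul, he'e]
    · rw [← hxe]
      calc (e * Ring.inverse X * e) * (e' * X * e')
          = e * (Ring.inverse X * ((e * e') * (X * e'))) := by simp only [mul_assoc]
        _ = 1 := by
            rw [hee', one_mul, ← mul_assoc (Ring.inverse X) X e',
              Ring.inverse_mul_cancel X hXu, one_mul, hee']
  have hRHS : e * (l • (1:A) + m • c) * e = l • a + m • b := by
    rw [hc_def]
    simp only [mul_add, add_mul, mul_smul_comm, smul_mul_assoc, mul_one]
    congr 1
    · rw [hee]
    · congr 1
      calc e * (e' * b * e') * e = e * (e' * (b * (e' * e))) := by simp only [mul_assoc]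
        _ = b := by rw [he'e, mul_one, ← mul_assoc e e' b, hee', one_mul]
  rw [hXx, ← hRHS]
  exact hconj

theorem stmt13 {A : Type*} [CStarAlgebra A] [PartialOrder A] [StarOrderedRing A]
    (ν : ℝ) (hν : ν ∈ Set.Ioo (0:ℝ) 1) (a b : A)
    (ha : 0 ≤ a) (ha' : IsUnit a) (hb : 0 ≤ b) (hb' : IsUnit b)
    (φ : A →ₗ[ℂ] ℂ) (hφpos : ∀ x : A, 0 ≤ x → 0 ≤ φ x) (hφ : φ ≠ 0) :
    (((1 - ν) / ν : ℝ) : ℂ) * φ b + ((ν / (1 - ν) : ℝ) : ℂ) * φ a -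
        ((((1 - ν) : ℝ) : ℂ) * (φ a)⁻¹ + ((ν : ℝ) : ℂ) * (φ b)⁻¹)⁻¹ ≤
      φ (Cmean ν a b) := by
  obtain ⟨hν0, hν1⟩ := hν
  have hs : (0:ℝ) < 1 - ν := by linarith
  have hnt : Nontrivial A := by
    rcases subsingleton_or_nontrivial A with h | h
    · exact absurd (LinearMap.ext fun x => by rw [Subsingleton.elim x 0, map_zero, map_zero]) hφ
    · exact h
  -- φ is monotone
  have hφmono : ∀ x y : A, x ≤ y → φ x ≤ φ y := by
    intro x y hxy
    have := hφpos _ (sub_nonneg.2 hxy)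
    rw [map_sub] at this
    exact sub_nonneg.mp this
  -- positivity of φ 1
  have hφ1 : 0 < φ 1 := by
    have h1nonneg : 0 ≤ φ 1 := hφpos 1 zero_le_one
    refine h1nonneg.lt_of_ne' fun h10 => ?_
    have hsa : ∀ y : A, IsSelfAdjoint y → φ y = 0 := by
      intro y hy
      have halg : ∀ t : ℝ, φ (algebraMap ℝ A t) = 0 := by
        intro t
        rw [IsScalarTower.algebraMap_apply ℝ ℂ A, Algebra.algebraMap_eq_smul_one, map_smul,
          smul_eq_mul, h10, mul_zero]
      have u1 : 0 ≤ φ (algebraMap ℝ A ‖y‖) - φ y := by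
        rw [← map_sub]
        exact hφpos _ (sub_nonneg.2 hy.le_algebraMap_norm_self)
      have u2 : 0 ≤ φ y + φ (algebraMap ℝ A ‖y‖) := by
        rw [← map_add]
        have h5 := sub_nonneg.2 hy.neg_algebraMap_norm_le_self
        rw [sub_neg_eq_add] at h5
        exact hφpos _ h5
      rw [halg] at u1 u2
      rw [zero_sub] at u1
      rw [add_zero] at u2
      exact le_antisymm (neg_nonneg.mp u1) u2
    apply hφ
    ext x
    have hx := realPart_add_I_smul_imaginaryPart x
    rw [LinearMap.zero_apply, ← hx, map_add, map_smul,
      hsa _ (realPart x).2, hsa _ (imaginaryPart x).2, smul_zero, add_zero]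
  -- lower bounds making φ a, φ b positive
  have hpos_of : ∀ x : A, 0 ≤ x → IsUnit x → 0 < φ x := by
    intro x hx hxu
    obtain ⟨ε, hε, hεle⟩ := (CFC.exists_pos_algebraMap_le_iff (.of_nonneg hx)).mpr
      (fun t ht => (spectrum_nonneg_of_nonneg hx ht).lt_of_ne' fun h =>
        spectrum.zero_notMem ℝ hxu (h ▸ ht))
    calc (0:ℂ) < φ (algebraMap ℝ A ε) := by
          rw [IsScalarTower.algebraMap_apply ℝ ℂ A, Algebra.algebraMap_eq_smul_one, map_smul,
            smul_eq_mul]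
          exact mul_pos (by rw [Complex.coe_algebraMap]; exact Complex.zero_lt_real.mpr hε) hφ1
      _ ≤ φ x := hφmono _ _ hεle
  have hφa : 0 < φ a := hpos_of a ha ha'
  have hφb : 0 < φ b := hpos_of b hb hb'
  set α : ℝ := (φ a).re with hα_def
  set β : ℝ := (φ b).re with hβ_def
  have hαpos : 0 < α := (Complex.lt_def.mp hφa).1
  have hβpos : 0 < β := (Complex.lt_def.mp hφb).1
  have hφa_eq : φ a = (α : ℂ) := by
    apply Complex.ext
    · simp [hα_def]
    · simp [← (Complex.lt_def.mp hφa).2]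
  have hφb_eq : φ b = (β : ℂ) := by
    apply Complex.ext
    · simp [hβ_def]
    · simp [← (Complex.lt_def.mp hφb).2]
  set D : ℝ := (1 - ν) * β + ν * α with hD_def
  have hD : 0 < D := by positivity
  set l : ℝ := (1 - ν) * β ^ 2 / D ^ 2 with hl_def
  set m : ℝ := ν * α ^ 2 / D ^ 2 with hm_def
  -- scalar tangent-line inequality
  have hlm : ∀ t : ℝ, 0 < t → ((1 - ν) + ν * t⁻¹)⁻¹ ≤ l + m * t := by
    intro t ht
    have h2 : ((1 - ν) + ν * t⁻¹)⁻¹ = t / ((1 - ν) * t + ν) := by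
      rw [eq_div_iff (by positivity)]
      rw [inv_mul_eq_div, div_eq_iff (by positivity)]
      field_simp
    rw [h2, div_le_iff₀ (by positivity), ← sub_nonneg]
    have hkey : (l + m * t) * ((1 - ν) * t + ν) - t
        = (1 - ν) * ν * (α * t - β) ^ 2 / D ^ 2 := by
      rw [hl_def, hm_def, hD_def]
      field_simp
      ring
    rw [hkey]
    positivity
  -- the operator inequality
  have hop := key_op_ineq ha ha' hb hb' hs hν0 hlm
  -- apply φ
  have hφop := hφmono _ _ hop
  have hsmul : ∀ (t : ℝ) (x : A), φ (t • x) = (t : ℂ) * φ x := by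
    intro t x
    rw [← Complex.coe_smul, map_smul, smul_eq_mul]
  have hφrhs : φ ((l : ℝ) • a + (m : ℝ) • b) = ((l * α + m * β : ℝ) : ℂ) := by
    rw [map_add, hsmul, hsmul, hφa_eq, hφb_eq]
    push_cast
    ring
  rw [hφrhs] at hφop
  -- identify the harmonic mean scalar
  have hharm : ((((1 - ν) : ℝ) : ℂ) * (φ a)⁻¹ + ((ν : ℝ) : ℂ) * (φ b)⁻¹)⁻¹
      = ((l * α + m * β : ℝ) : ℂ) := by
    rw [hφa_eq, hφb_eq]
    have : ((1 - ν : ℝ) : ℂ) * (α : ℂ)⁻¹ + ((ν : ℝ) : ℂ) * (β : ℂ)⁻¹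
        = (((1 - ν) * α⁻¹ + ν * β⁻¹ : ℝ) : ℂ) := by push_cast; ring
    rw [this, ← Complex.ofReal_inv]
    congr 1
    rw [hl_def, hm_def, hD_def]
    field_simp
  -- expand φ (Cmean ν a b)
  have hCmean : φ (Cmean ν a b) = (((1 - ν) / ν : ℝ) : ℂ) * φ b + ((ν / (1 - ν) : ℝ) : ℂ) * φ a
      - φ (Ring.inverse (((1 - ν) : ℝ) • Ring.inverse a + (ν : ℝ) • Ring.inverse b)) := by
    rw [Cmean, map_sub, map_add, map_smul, map_smul, smul_eq_mul, smul_eq_mul,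
      Complex.coe_smul, Complex.coe_smul]
  rw [hCmean, hharm]
  exact sub_le_sub_left hφop _
end

section
/- Let A be a unital C*-algebra, ν ∈ (0,1), and a, b positive definite elements. For every real λ ∈ [0,1], (1−ν)⁻¹(ν − λ²)·a + ν⁻¹(2λ − λ² − ν)·b ≤ C_ν(a,b). -/
private lemma key_conj {A : Type*} [CStarAlgebra A] [PartialOrder A] [StarOrderedRing A]
    (u w r : A) (hu : 0 ≤ u) (hr : IsSelfAdjoint r) (hwsa : IsSelfAdjoint w)
    (hwu : w * u = 1) (huw : u * w = 1) (t : ℝ) :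
    (2*t) • r ≤ (t^2) • w + r * u * r := by
  have h := star_left_conjugate_nonneg hu (t • w - r)
  have hs : star (t • w - r) = t • w - r := by
    simp [star_smul, hwsa.star_eq, hr.star_eq]
  rw [hs] at h
  have expand : (t • w - r) * u * (t • w - r)
      = ((t^2) • w + r * u * r) - (2*t) • r := by
    have h1 : (t • w - r) * u = t • (1:A) - r * u := by
      rw [sub_mul, smul_mul_assoc, hwu]
    have h2 : r * u * (t • w) = t • r := by
      rw [mul_smul_comm, mul_assoc, huw, mul_one]
    rw [h1, sub_mul, mul_sub, mul_sub, h2, smul_mul_assoc, one_mul, smul_smul,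
      smul_mul_assoc, one_mul]
    module
  rw [expand] at h
  exact sub_nonneg.mp h

theorem stmt14 {A : Type*} [CStarAlgebra A] [PartialOrder A] [StarOrderedRing A]
    (ν : ℝ) (hν : ν ∈ Set.Ioo (0:ℝ) 1) (a b : A)
    (ha : 0 ≤ a) (ha' : IsUnit a) (hb : 0 ≤ b) (hb' : IsUnit b)
    (lam : ℝ) (hlam : lam ∈ Set.Icc (0:ℝ) 1) :
    (((1 - ν)⁻¹ * (ν - lam ^ 2) : ℝ) : ℂ) • a +
        ((ν⁻¹ * (2 * lam - lam ^ 2 - ν) : ℝ) : ℂ) • b ≤ Cmean ν a b := by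
  obtain ⟨hν0, hν1⟩ := hν
  have hν1' : (0:ℝ) < 1 - ν := by linarith
  set a' : A := (↑ha'.unit⁻¹ : A) with ha'def
  set b' : A := (↑hb'.unit⁻¹ : A) with hb'def
  have haa' : a * a' = 1 := ha'.mul_val_inv
  have ha'a : a' * a = 1 := ha'.val_inv_mul
  have hbb' : b * b' = 1 := hb'.mul_val_inv
  have hb'b : b' * b = 1 := hb'.val_inv_mul
  have ha'pos : 0 ≤ a' := by
    rw [ha'def]; exact (CFC.inv_nonneg ha'.unit).mpr (by rwa [ha'.unit_spec])
  have hb'pos : 0 ≤ b' := by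
    rw [hb'def]; exact (CFC.inv_nonneg hb'.unit).mpr (by rwa [hb'.unit_spec])
  set c : A := (1 - ν) • a' + ν • b' with hcdef
  have h1 : 0 ≤ (1 - ν) • a' := smul_nonneg hν1'.le ha'pos
  have h2 : 0 ≤ ν • b' := smul_nonneg hν0.le hb'pos
  have hcpos : 0 ≤ c := add_nonneg h1 h2
  -- (1-ν) • a' is a unit with inverse (1-ν)⁻¹ • a
  have hunit1 : IsUnit ((1 - ν) • a' : A) := by
    refine ⟨⟨(1 - ν) • a', (1 - ν)⁻¹ • a, ?_, ?_⟩, rfl⟩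
    · rw [smul_mul_smul_comm, ha'a, mul_inv_cancel₀ hν1'.ne', one_smul]
    · rw [smul_mul_smul_comm, haa', inv_mul_cancel₀ hν1'.ne', one_smul]
  have hc : IsUnit c := CStarAlgebra.isUnit_of_le _ (le_add_of_nonneg_right h2) (IsStrictlyPositive.iff_of_unital.mpr ⟨h1, hunit1⟩)
  set r : A := (↑hc.unit⁻¹ : A) with hrdef
  have hrc : r * c = 1 := hc.val_inv_mul
  have hcr : c * r = 1 := hc.mul_val_inv
  have hrpos : 0 ≤ r := by
    rw [hrdef]; exact (CFC.inv_nonneg hc.unit).mpr (by rwa [hc.unit_spec])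
  have hrsa : IsSelfAdjoint r := .of_nonneg hrpos
  -- key inequalities
  have k1 : (2*lam) • r ≤ (lam^2) • ((1 - ν)⁻¹ • a) + r * ((1 - ν) • a') * r := by
    refine key_conj _ _ _ h1 hrsa (.of_nonneg (smul_nonneg (by positivity) ha)) ?_ ?_ lam
    · rw [smul_mul_smul_comm, haa', inv_mul_cancel₀ hν1'.ne', one_smul]
    · rw [smul_mul_smul_comm, ha'a, mul_inv_cancel₀ hν1'.ne', one_smul]
  have k2 : (2*(1-lam)) • r ≤ ((1-lam)^2) • (ν⁻¹ • b) + r * (ν • b') * r := by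
    refine key_conj _ _ _ h2 hrsa (.of_nonneg (smul_nonneg (by positivity) hb)) ?_ ?_ (1-lam)
    · rw [smul_mul_smul_comm, hbb', inv_mul_cancel₀ hν0.ne', one_smul]
    · rw [smul_mul_smul_comm, hb'b, mul_inv_cancel₀ hν0.ne', one_smul]
  have ksum := add_le_add k1 k2
  have hlhs : (2*lam) • r + (2*(1-lam)) • r = r + r := by module
  have hrhs : (lam^2) • ((1 - ν)⁻¹ • a) + r * ((1 - ν) • a') * r
      + (((1-lam)^2) • (ν⁻¹ • b) + r * (ν • b') * r)
      = ((lam^2 * (1 - ν)⁻¹) • a + ((1-lam)^2 * ν⁻¹) • b) + r := by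
    have : r * ((1 - ν) • a') * r + r * (ν • b') * r = r := by
      rw [← add_mul, ← mul_add, ← hcdef, hrc, one_mul]
    rw [add_add_add_comm, this, smul_smul, smul_smul]
  rw [hlhs, hrhs] at ksum
  have hkey : r ≤ (lam^2 * (1 - ν)⁻¹) • a + ((1-lam)^2 * ν⁻¹) • b :=
    (add_le_add_iff_right r).mp ksum
  -- unfold Cmean
  have hinva : Ring.inverse a = a' := by rw [← ha'.unit_spec, Ring.inverse_unit]
  have hinvb : Ring.inverse b = b' := by rw [← hb'.unit_spec, Ring.inverse_unit]
  have hinvc : Ring.inverse c = r := by rw [← hc.unit_spec, Ring.inverse_unit]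
  have hCmean : Cmean ν a b
      = ((1 - ν) / ν) • b + (ν / (1 - ν)) • a - r := by
    rw [Cmean, hinva, hinvb]
    simp only [Complex.coe_smul]
    rw [← hcdef, hinvc]
  rw [hCmean]
  simp only [Complex.coe_smul]
  rw [le_sub_iff_add_le]
  calc ((1 - ν)⁻¹ * (ν - lam ^ 2)) • a + (ν⁻¹ * (2 * lam - lam ^ 2 - ν)) • b + r
      ≤ ((1 - ν)⁻¹ * (ν - lam ^ 2)) • a + (ν⁻¹ * (2 * lam - lam ^ 2 - ν)) • b
        + ((lam^2 * (1 - ν)⁻¹) • a + ((1-lam)^2 * ν⁻¹) • b) := by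
        exact add_le_add_right hkey _
    _ = ((1 - ν) / ν) • b + (ν / (1 - ν)) • a := by
        match_scalars <;> field_simp <;> ring
end

section
/- Let A be a unital C*-algebra, ν ∈ (0,1), and a, b positive definite elements. Then 2((1−ν)^{−1/2} − 1)·a ≤ C_ν(a,b) and 2(ν^{−1/2} − 1)·b ≤ C_ν(a,b). -/
set_option linter.unusedSectionVars false
set_option maxHeartbeats 1000000

section helpers
variable {A : Type*} [CStarAlgebra A] [PartialOrder A] [StarOrderedRing A]

lemma my_inverse_eq {x y : A} (h1 : x * y = 1) (h2 : y * x = 1) : Ring.inverse x = y := by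
  have hx : IsUnit x := ⟨⟨x, y, h1, h2⟩, rfl⟩
  calc Ring.inverse x = Ring.inverse x * (x * y) := by rw [h1, mul_one]
  _ = (Ring.inverse x * x) * y := by rw [mul_assoc]
  _ = y := by rw [Ring.inverse_mul_cancel x hx, one_mul]

lemma my_rsmul_nonneg {r : ℝ} (hr : 0 ≤ r) {x : A} (hx : 0 ≤ x) : 0 ≤ (r : ℂ) • x := by
  have key : (r : ℂ) • x = star (((Real.sqrt r : ℝ) : ℂ) • (1:A)) * x * (((Real.sqrt r : ℝ) : ℂ) • (1:A)) := by
    simp [star_smul, smul_mul_assoc, mul_smul_comm, smul_smul, ← Complex.ofReal_mul,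
      Real.mul_self_sqrt hr]
  rw [key]
  exact star_left_conjugate_nonneg hx _

lemma my_smul_one_isUnit {w : ℝ} (hw : 0 < w) : IsUnit ((w : ℂ) • (1:A)) := by
  refine ⟨⟨(w : ℂ) • (1:A), ((w⁻¹ : ℝ) : ℂ) • (1:A), ?_, ?_⟩, rfl⟩ <;>
    · rw [smul_mul_assoc, one_mul, smul_smul, ← Complex.ofReal_mul]
      first
      | rw [mul_inv_cancel₀ hw.ne']; simp
      | rw [inv_mul_cancel₀ hw.ne']; simp

lemma my_smul_one_add_isUnit {w : ℝ} (hw : 0 < w) {x : A} (hx : 0 ≤ x) :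
    IsUnit ((w : ℂ) • (1:A) + x) := by
  refine CStarAlgebra.isUnit_of_le _ ?_ ⟨my_rsmul_nonneg hw.le zero_le_one, my_smul_one_isUnit hw⟩
  exact le_add_of_nonneg_right hx

lemma my_inverse_nonneg {x : A} (hx : 0 ≤ x) (hx' : IsUnit x) : 0 ≤ Ring.inverse x := by
  lift x to Aˣ using hx'
  rw [Ring.inverse_unit]
  exact CFC.inv_nonneg_of_nonneg x hx

lemma my_commute_inverse {x y : A} (h : x * y = y * x) (hx : IsUnit x) :
    Ring.inverse x * y = y * Ring.inverse x := by
  have h2 := congrArg (fun z => Ring.inverse x * z * Ring.inverse x) h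
  simp only [← mul_assoc] at h2
  rw [Ring.inverse_mul_cancel x hx, one_mul] at h2
  rw [mul_assoc, mul_assoc, Ring.mul_inverse_cancel x hx, mul_one] at h2
  exact h2.symm

lemma my_sa_smul_one (r : ℝ) : star ((r:ℂ) • (1:A)) = (r:ℂ) • (1:A) := by
  simp [star_smul, Complex.star_def, Complex.conj_ofReal]

lemma my_core (μ w : ℝ) (hμ : 0 < μ) (hμ1 : μ < 1) (hw : w = 1 - μ) (c : A)
    (hc : 0 ≤ c) (hc' : IsUnit c) :
    ((2 * (μ ^ (-(1:ℝ)/2) - 1) : ℝ) : ℂ) • (1:A) ≤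
      ((μ / w : ℝ) : ℂ) • c + ((w / μ : ℝ) : ℂ) • (1:A) -
        Ring.inverse ((μ : ℂ) • (1:A) + (w : ℂ) • Ring.inverse c) := by
  have hw' : 0 < w := by rw [hw]; linarith
  set s : ℝ := Real.sqrt μ with hs_def
  have hs : 0 < s := Real.sqrt_pos.mpr hμ
  have hs2 : s * s = μ := Real.mul_self_sqrt hμ.le
  have hwne : 1 - s * s ≠ 0 := by rw [hs2, ← hw]; exact hw'.ne'
  have hpow : μ ^ (-(1:ℝ)/2) = s⁻¹ := by
    rw [show (-(1:ℝ)/2) = -(1/2) by ring, Real.rpow_neg hμ.le, ← Real.sqrt_eq_rpow]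
  set ci : A := Ring.inverse c with hci_def
  have hci : 0 ≤ ci := my_inverse_nonneg hc hc'
  set E : A := (μ : ℂ) • c + (w : ℂ) • (1:A) with hE_def
  have hE : IsUnit E := by
    rw [hE_def, add_comm]
    exact my_smul_one_add_isUnit hw' (my_rsmul_nonneg hμ.le hc)
  have hEnonneg : 0 ≤ E :=
    add_nonneg (my_rsmul_nonneg hμ.le hc) (my_rsmul_nonneg hw'.le zero_le_one)
  have hEinv : 0 ≤ Ring.inverse E := my_inverse_nonneg hEnonneg hE
  have hEc : E * c = c * E := by
    rw [hE_def]; simp [add_mul, mul_add, smul_mul_assoc, mul_smul_comm]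
  have hinvEc : Ring.inverse E * c = c * Ring.inverse E := my_commute_inverse hEc hE
  -- harmonic term equals c * E⁻¹
  have hXc : ((μ : ℂ) • (1:A) + (w : ℂ) • ci) * c = E := by
    rw [hE_def, hci_def]
    simp [add_mul, smul_mul_assoc, Ring.inverse_mul_cancel c hc', add_comm]
  have hcX : c * ((μ : ℂ) • (1:A) + (w : ℂ) • ci) = E := by
    rw [hE_def, hci_def]
    simp [mul_add, mul_smul_comm, Ring.mul_inverse_cancel c hc', add_comm]
  have hXcomm : ((μ : ℂ) • (1:A) + (w : ℂ) • ci) * c = c * ((μ : ℂ) • (1:A) + (w : ℂ) • ci) := by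
    rw [hXc, hcX]
  have hXE : ((μ : ℂ) • (1:A) + (w : ℂ) • ci) * E = E * ((μ : ℂ) • (1:A) + (w : ℂ) • ci) := by
    conv_lhs => rw [← hXc]
    conv_rhs => rw [← hXc]
    rw [hXcomm, ← mul_assoc, hXcomm]
  have hinvEX : Ring.inverse E * ((μ : ℂ) • (1:A) + (w : ℂ) • ci)
      = ((μ : ℂ) • (1:A) + (w : ℂ) • ci) * Ring.inverse E := by
    exact my_commute_inverse (by rw [hXE]) hE
  have hH : Ring.inverse ((μ : ℂ) • (1:A) + (w : ℂ) • ci) = c * Ring.inverse E := by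
    apply my_inverse_eq
    · rw [← mul_assoc, hXc, Ring.mul_inverse_cancel E hE]
    · rw [mul_assoc, hinvEX, ← mul_assoc, hcX, Ring.mul_inverse_cancel E hE]
  set r : ℝ := w * (1 - s) / (μ * s) with hr_def
  set A1 : A := c - (r : ℂ) • (1:A) with hA1_def
  have hA1E : A1 * E = E * A1 := by
    rw [hA1_def, hE_def]
    simp only [Complex.coe_smul, sub_mul, mul_sub, add_mul, mul_add, smul_mul_assoc,
      mul_smul_comm, smul_smul, mul_one, one_mul]
    match_scalars <;> ring
  -- key algebraic identity
  have key : ((μ / w : ℝ) : ℂ) • c + ((w / μ - 2 * (s⁻¹ - 1) : ℝ) : ℂ) • (1:A)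
      - c * Ring.inverse E
      = ((μ ^ 2 / w : ℝ) : ℂ) • (A1 * Ring.inverse E * A1) := by
    apply hE.mul_right_cancel
    have lhsE : (((μ / w : ℝ) : ℂ) • c + ((w / μ - 2 * (s⁻¹ - 1) : ℝ) : ℂ) • (1:A)
        - c * Ring.inverse E) * E
        = ((μ / w : ℝ) : ℂ) • (c * E) + ((w / μ - 2 * (s⁻¹ - 1) : ℝ) : ℂ) • E - c := by
      rw [sub_mul, add_mul, smul_mul_assoc, smul_mul_assoc, one_mul, mul_assoc,
        Ring.inverse_mul_cancel E hE, mul_one]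
    have rhsE : (((μ ^ 2 / w : ℝ) : ℂ) • (A1 * Ring.inverse E * A1)) * E
        = ((μ ^ 2 / w : ℝ) : ℂ) • (A1 * A1) := by
      rw [smul_mul_assoc, mul_assoc, hA1E, ← mul_assoc, mul_assoc _ (Ring.inverse E) E,
        Ring.inverse_mul_cancel E hE, mul_one]
    rw [lhsE, rhsE, hE_def, hA1_def]
    simp only [Complex.coe_smul, mul_add, mul_sub, sub_mul, add_mul, smul_mul_assoc,
      mul_smul_comm, smul_smul, mul_one, one_mul, smul_sub, smul_add]
    match_scalars
    all_goals try simp only [hr_def, hw, ← hs2]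
    all_goals field_simp [show (1:ℝ) - s ^ 2 ≠ 0 by rw [sq]; exact hwne]
    all_goals ring
  -- positivity
  have hA1sa : star A1 = A1 := by
    rw [hA1_def, star_sub, my_sa_smul_one, (IsSelfAdjoint.of_nonneg hc).star_eq]
  have hsq : 0 ≤ A1 * Ring.inverse E * A1 := by
    have := star_left_conjugate_nonneg hEinv A1
    rwa [hA1sa] at this
  have hpos : 0 ≤ ((μ / w : ℝ) : ℂ) • c + ((w / μ - 2 * (s⁻¹ - 1) : ℝ) : ℂ) • (1:A)
      - c * Ring.inverse E := by
    rw [key]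
    exact my_rsmul_nonneg (by positivity) hsq
  rw [← sub_nonneg]
  have hre : ((μ / w : ℝ) : ℂ) • c + ((w / μ : ℝ) : ℂ) • (1:A)
      - Ring.inverse ((μ : ℂ) • (1:A) + (w : ℂ) • ci)
      - ((2 * (μ ^ (-(1:ℝ)/2) - 1) : ℝ) : ℂ) • (1:A)
      = ((μ / w : ℝ) : ℂ) • c + ((w / μ - 2 * (s⁻¹ - 1) : ℝ) : ℂ) • (1:A)
      - c * Ring.inverse E := by
    rw [hH, hpow]
    simp only [Complex.coe_smul]
    match_scalars <;> ring
  rw [hre]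
  exact hpos

lemma my_isUnit_of_mul {x y z : A} (h1 : x * y = 1) (h2 : z * x = 1) : IsUnit x := by
  have hzy : z = y := by
    calc z = z * (x * y) := by rw [h1, mul_one]
    _ = (z * x) * y := by rw [mul_assoc]
    _ = y := by rw [h2, one_mul]
  exact ⟨⟨x, y, h1, hzy ▸ h2⟩, rfl⟩

lemma my_conj (p q μ w t : ℝ) (hμ : 0 < μ) (hw : 0 ≤ w) {a b : A}
    (ha : 0 ≤ a) (ha' : IsUnit a) (hb : 0 ≤ b) (hb' : IsUnit b)
    (H : ∀ c : A, 0 ≤ c → IsUnit c →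
      ((t : ℝ) : ℂ) • (1:A) ≤ ((p : ℝ) : ℂ) • c + ((q : ℝ) : ℂ) • (1:A) -
        Ring.inverse ((μ : ℂ) • (1:A) + (w : ℂ) • Ring.inverse c)) :
    (t : ℂ) • a ≤ (p : ℂ) • b + (q : ℂ) • a -
      Ring.inverse ((μ : ℂ) • Ring.inverse a + (w : ℂ) • Ring.inverse b) := by
  set g : A := CFC.sqrt a with hg_def
  have hg0 : 0 ≤ g := CFC.sqrt_nonneg a
  have hgg : g * g = a := CFC.sqrt_mul_sqrt_self a ha
  have hgu : IsUnit g := by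
    refine my_isUnit_of_mul (y := g * Ring.inverse a) (z := Ring.inverse a * g) ?_ ?_
    · rw [← mul_assoc, hgg, Ring.mul_inverse_cancel a ha']
    · rw [mul_assoc, hgg, Ring.inverse_mul_cancel a ha']
  set gi : A := Ring.inverse g with hgi_def
  have hgig : gi * g = 1 := Ring.inverse_mul_cancel g hgu
  have hggi : g * gi = 1 := Ring.mul_inverse_cancel g hgu
  have hgiu : IsUnit gi := my_isUnit_of_mul hgig hggi
  have hgi0 : 0 ≤ gi := my_inverse_nonneg hg0 hgu
  have hgisa : star gi = gi := (IsSelfAdjoint.of_nonneg hgi0).star_eq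
  have hgsa : IsSelfAdjoint g := IsSelfAdjoint.of_nonneg hg0
  set c : A := gi * b * gi with hc_def
  have hc0 : 0 ≤ c := by
    have := star_left_conjugate_nonneg hb gi
    rwa [hgisa] at this
  have hcu : IsUnit c := (hgiu.mul hb').mul hgiu
  have hinvc : Ring.inverse c = g * Ring.inverse b * g := by
    apply my_inverse_eq
    · rw [hc_def]
      simp only [mul_assoc]
      rw [Ring.inverse_mul_cancel_left g _ hgu, Ring.mul_inverse_cancel_left b _ hb', hgig]
    · rw [hc_def]
      simp only [mul_assoc]
      rw [Ring.mul_inverse_cancel_left g _ hgu, Ring.inverse_mul_cancel_left b _ hb', hggi]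
  have hinva : Ring.inverse a = gi * gi := by
    apply my_inverse_eq
    · rw [← hgg]
      simp only [mul_assoc]
      rw [Ring.mul_inverse_cancel_left g _ hgu, hggi]
    · rw [← hgg]
      simp only [mul_assoc]
      rw [Ring.inverse_mul_cancel_left g _ hgu, hgig]
  set Y : A := (μ : ℂ) • (1:A) + (w : ℂ) • Ring.inverse c with hY_def
  have hYu : IsUnit Y := my_smul_one_add_isUnit hμ (my_rsmul_nonneg hw (my_inverse_nonneg hc0 hcu))
  set X : A := (μ : ℂ) • Ring.inverse a + (w : ℂ) • Ring.inverse b with hX_def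
  have hXeq : X = gi * Y * gi := by
    have h1 : gi * (1:A) * gi = Ring.inverse a := by rw [mul_one, hinva]
    have h2 : gi * (g * Ring.inverse b * g) * gi = Ring.inverse b := by
      simp only [mul_assoc]
      rw [hggi, mul_one, Ring.inverse_mul_cancel_left g _ hgu]
    rw [hX_def, hY_def, hinvc]
    simp only [mul_add, add_mul, mul_smul_comm, smul_mul_assoc]
    rw [h1, h2]
  have hXinv : Ring.inverse X = g * Ring.inverse Y * g := by
    apply my_inverse_eq
    · rw [hXeq]
      simp only [mul_assoc]
      rw [Ring.inverse_mul_cancel_left g _ hgu, Ring.mul_inverse_cancel_left Y _ hYu, hgig]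
    · rw [hXeq]
      simp only [mul_assoc]
      rw [Ring.mul_inverse_cancel_left g _ hgu, Ring.inverse_mul_cancel_left Y _ hYu, hggi]
  have hcore := H c hc0 hcu
  have hconj := hgsa.conjugate_le_conjugate hcore
  have hgcg : g * c * g = b := by
    rw [hc_def]
    simp only [mul_assoc]
    rw [hgig, mul_one, ← mul_assoc, hggi, one_mul]
  have hL : g * (((t : ℝ) : ℂ) • (1:A)) * g = (t : ℂ) • a := by
    rw [mul_smul_comm, smul_mul_assoc, mul_one, hgg]
  have hR : g * (((p : ℝ) : ℂ) • c + ((q : ℝ) : ℂ) • (1:A) - Ring.inverse Y) * g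
      = (p : ℂ) • b + (q : ℂ) • a - Ring.inverse X := by
    rw [hXinv]
    simp only [mul_add, add_mul, mul_sub, sub_mul, mul_smul_comm, smul_mul_assoc, mul_one, one_mul]
    rw [hgcg, hgg]
  rw [hL, hR] at hconj
  exact hconj

end helpers

theorem stmt15 {A : Type*} [CStarAlgebra A] [PartialOrder A] [StarOrderedRing A]
    (ν : ℝ) (hν : ν ∈ Set.Ioo (0:ℝ) 1) (a b : A)
    (ha : 0 ≤ a) (ha' : IsUnit a) (hb : 0 ≤ b) (hb' : IsUnit b) :
    ((2 * ((1 - ν) ^ (-(1:ℝ)/2) - 1) : ℝ) : ℂ) • a ≤ Cmean ν a b ∧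
    ((2 * (ν ^ (-(1:ℝ)/2) - 1) : ℝ) : ℂ) • b ≤ Cmean ν a b := by
  obtain ⟨hν0, hν1⟩ := hν
  have hu : 0 < 1 - ν := by linarith
  constructor
  · rw [Cmean]
    exact my_conj ((1 - ν)/ν) (ν/(1 - ν)) (1 - ν) ν (2 * ((1 - ν) ^ (-(1:ℝ)/2) - 1))
      hu hν0.le ha ha' hb hb'
      (fun c hc hcu => my_core (1 - ν) ν hu (by linarith) (by ring) c hc hcu)
  · rw [Cmean]
    have h2 := my_conj (ν/(1 - ν)) ((1 - ν)/ν) ν (1 - ν) (2 * (ν ^ (-(1:ℝ)/2) - 1))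
      hν0 hu.le hb hb' ha ha'
      (fun c hc hcu => my_core ν (1 - ν) hν0 hν1 (by ring) c hc hcu)
    rw [add_comm ((ν : ℂ) • Ring.inverse b) (((1 - ν : ℝ) : ℂ) • Ring.inverse a),
      add_comm ((((ν/(1 - ν) : ℝ)):ℂ) • a) ((((1 - ν)/ν : ℝ):ℂ) • b)] at h2
    exact h2
end

section
/- Let A be a unital C*-algebra, ν ∈ (0,1), and a, b positive definite elements. Then the ν-weighted arithmetic mean satisfies (1−ν)b + νa ≤ C_ν(a,b). -/
theorem stmt16 {A : Type*} [CStarAlgebra A] [PartialOrder A] [StarOrderedRing A]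
    (ν : ℝ) (hν : ν ∈ Set.Ioo (0:ℝ) 1) (a b : A)
    (ha : 0 ≤ a) (ha' : IsUnit a) (hb : 0 ≤ b) (hb' : IsUnit b) :
    (((1 - ν) : ℝ) : ℂ) • b + ((ν : ℝ) : ℂ) • a ≤ Cmean ν a b := by
  obtain ⟨hν0, hν1⟩ := hν
  have hμ0 : (0:ℝ) < 1 - ν := by linarith
  set μ : ℝ := 1 - ν with hμdef
  set ia := Ring.inverse a with hia_def
  set ib := Ring.inverse b with hib_def
  have haia : a * ia = 1 := Ring.mul_inverse_cancel a ha'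
  have hiaa : ia * a = 1 := Ring.inverse_mul_cancel a ha'
  have hbib : b * ib = 1 := Ring.mul_inverse_cancel b hb'
  have hibb : ib * b = 1 := Ring.inverse_mul_cancel b hb'
  set T : A := μ • b + ν • a with hTdef
  have hT0 : 0 ≤ T := add_nonneg (smul_nonneg hμ0.le hb) (smul_nonneg hν0.le ha)
  have hνa_unit : IsUnit (ν • a) := by
    refine isUnit_iff_exists.mpr ⟨ν⁻¹ • ia, ?_, ?_⟩
    · simp [smul_mul_smul_comm, haia, smul_smul, mul_inv_cancel₀ hν0.ne', inv_mul_cancel₀ hν0.ne']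
    · simp [smul_mul_smul_comm, hiaa, smul_smul, mul_inv_cancel₀ hν0.ne', inv_mul_cancel₀ hν0.ne']
  have hT : IsUnit T := CStarAlgebra.isUnit_of_le (ν • a)
    (le_add_of_nonneg_left (smul_nonneg hμ0.le hb)) (IsStrictlyPositive.iff_of_unital.mpr ⟨smul_nonneg hν0.le ha, hνa_unit⟩)
  set iT := Ring.inverse T with hiT_def
  have hTiT : T * iT = 1 := Ring.mul_inverse_cancel T hT
  have hiTT : iT * T = 1 := Ring.inverse_mul_cancel T hT
  have hiT0 : 0 ≤ iT := by
    have := CFC.inv_nonneg_of_nonneg hT.unit (by rw [IsUnit.unit_spec]; exact hT0)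
    rwa [hiT_def, ← hT.unit_spec, Ring.inverse_unit]
  have cA : ∀ x : A, a * (ia * x) = x := fun x => by rw [← mul_assoc, haia, one_mul]
  have cA' : ∀ x : A, ia * (a * x) = x := fun x => by rw [← mul_assoc, hiaa, one_mul]
  have cB : ∀ x : A, b * (ib * x) = x := fun x => by rw [← mul_assoc, hbib, one_mul]
  have cB' : ∀ x : A, ib * (b * x) = x := fun x => by rw [← mul_assoc, hibb, one_mul]
  set u : A := μ • ia + ν • ib with hu_def
  have hu1 : u = ia * (T * ib) := by
    rw [hu_def, hTdef]
    simp only [add_mul, mul_add, smul_mul_assoc, mul_smul_comm, hbib, hiaa, mul_one, one_mul, cA']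
  have hu2 : u = ib * (T * ia) := by
    rw [hu_def, hTdef]
    simp only [add_mul, mul_add, smul_mul_assoc, mul_smul_comm, haia, hibb, mul_one, one_mul, cB']
  have huv : u * (b * (iT * a)) = 1 := by
    rw [hu1, mul_assoc, mul_assoc, cB', ← mul_assoc T, hTiT, one_mul, hiaa]
  have hvu : (b * (iT * a)) * u = 1 := by
    rw [hu1, mul_assoc, mul_assoc, cA, ← mul_assoc iT, hiTT, one_mul, hbib]
  have hv'u : (a * (iT * b)) * u = 1 := by
    rw [hu2, mul_assoc, mul_assoc, cB, ← mul_assoc iT, hiTT, one_mul, haia]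
  have hq : a * (iT * b) = b * (iT * a) := left_inv_eq_right_inv hv'u huv
  have hinvu : Ring.inverse u = b * (iT * a) := by
    have h : u = ((⟨u, b * (iT * a), huv, hvu⟩ : Aˣ) : A) := rfl
    rw [h, Ring.inverse_unit]; rfl
  -- expansions of a and b
  have hb1 : b = μ • (b * (iT * b)) + ν • (b * (iT * a)) := by
    conv_lhs => rw [← mul_one b, ← hiTT, ← mul_assoc, mul_assoc, hTdef]
    simp only [mul_add, mul_smul_comm]
  have ha1 : a = μ • (b * (iT * a)) + ν • (a * (iT * a)) := by
    conv_lhs => rw [← mul_one a, ← hiTT, ← mul_assoc, mul_assoc, hTdef]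
    simp only [mul_add, mul_smul_comm, hq]
  -- selfadjointness
  have hsa : star a = a := (IsSelfAdjoint.of_nonneg ha)
  have hsb : star b = b := (IsSelfAdjoint.of_nonneg hb)
  -- the Cmean formula
  have hC : Cmean ν a b = (μ/ν) • b + (ν/μ) • a - b * (iT * a) := by
    rw [Cmean]
    simp only [Complex.coe_smul, ← hμdef, ← hia_def, ← hib_def, ← hu_def, hinvu]
  rw [← sub_nonneg, hC]
  simp only [Complex.coe_smul, ← hμdef]
  have key : (μ/ν) • b + (ν/μ) • a - b * (iT * a) - (μ • b + ν • a)
      = (μ*ν)⁻¹ • (((μ^2) • b - (ν^2) • a) * (iT * ((μ^2) • b - (ν^2) • a))) := by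
    simp only [mul_sub, sub_mul, mul_smul_comm, smul_mul_assoc, smul_sub, smul_smul, hq]
    set p := b * (iT * b) with hp
    set q := b * (iT * a) with hqq
    set r := a * (iT * a) with hr
    rw [hb1, ha1]
    match_scalars <;> field_simp <;> ring
  rw [key]
  refine smul_nonneg (by positivity) ?_
  have hz : star ((μ^2) • b - (ν^2) • a) = (μ^2) • b - (ν^2) • a := by
    simp [star_sub, star_smul, hsa, hsb]
  have := star_left_conjugate_nonneg hiT0 ((μ^2) • b - (ν^2) • a)
  rwa [hz, mul_assoc] at this
end

section
/- Let A be a unital C*-algebra, ν ∈ (0,1), and a, b positive definite elements. Then there exists a contraction z ∈ A (i.e., ‖z‖ ≤ 1) such that (1−ν)b + νa = z*·C_ν(a,b)·z. -/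
section Helpers

lemma myinv_unique {M₀ : Type*} [MonoidWithZero M₀] {u x : M₀} (hu : IsUnit u)
    (h : u * x = 1) : Ring.inverse u = x := by
  calc Ring.inverse u = Ring.inverse u * (u * x) := by rw [h, mul_one]
    _ = Ring.inverse u * u * x := (mul_assoc _ _ _).symm
    _ = x := by rw [Ring.inverse_mul_cancel u hu, one_mul]

lemma mycommute_inv {M₀ : Type*} [MonoidWithZero M₀] {x y : M₀} (hy : IsUnit y)
    (h : Commute x y) : Commute x (Ring.inverse y) := by
  have h2 : Commute x (hy.unit : M₀) := by rwa [IsUnit.unit_spec]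
  have h3 : Ring.inverse y = ((hy.unit⁻¹ : M₀ˣ) : M₀) := by
    conv_lhs => rw [← IsUnit.unit_spec hy]
    rw [Ring.inverse_unit]
  rw [h3]
  exact h2.units_inv_right

lemma myinv_nonneg {A : Type*} [CStarAlgebra A] [PartialOrder A] [StarOrderedRing A]
    {x : A} (hx : 0 ≤ x) (hx' : IsUnit x) : 0 ≤ Ring.inverse x := by
  have hsa : star x = x := IsSelfAdjoint.of_nonneg hx
  have hss : star (Ring.inverse x) = Ring.inverse x := by
    rw [← Ring.inverse_star, hsa]
  have key : star (Ring.inverse x) * x * Ring.inverse x = Ring.inverse x := by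
    rw [hss, Ring.inverse_mul_cancel x hx', one_mul]
  exact key ▸ star_left_conjugate_nonneg hx _

end Helpers

theorem stmt17 {A : Type*} [CStarAlgebra A] [PartialOrder A] [StarOrderedRing A]
    (ν : ℝ) (hν : ν ∈ Set.Ioo (0:ℝ) 1) (a b : A)
    (ha : 0 ≤ a) (ha' : IsUnit a) (hb : 0 ≤ b) (hb' : IsUnit b) :
    ∃ z : A, ‖z‖ ≤ 1 ∧
      (((1 - ν) : ℝ) : ℂ) • b + ((ν : ℝ) : ℂ) • a = star z * Cmean ν a b * z := by
  obtain ⟨hν0, hν1⟩ := hν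
  have hμ0 : (0:ℝ) < 1 - ν := by linarith
  have hνne : ν ≠ 0 := hν0.ne'
  have hμne : (1:ℝ) - ν ≠ 0 := hμ0.ne'
  have hasa : star a = a := IsSelfAdjoint.of_nonneg ha
  -- square root of b and its inverse
  set p := CFC.sqrt b with hpdef
  have hp0 : 0 ≤ p := CFC.sqrt_nonneg _
  have hpsa : star p = p := IsSelfAdjoint.of_nonneg hp0
  have hpp : p * p = b := CFC.sqrt_mul_sqrt_self b hb
  have hpu : IsUnit p := by
    rcases isUnit_iff_exists.mp hb' with ⟨binv0, h1, h2⟩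
    refine isUnit_iff_exists.mpr ⟨p * binv0, ?_, ?_⟩
    · rw [← mul_assoc, hpp, h1]
    · have hpb : p * b = b * p := by rw [← hpp, mul_assoc]
      have hbinvp : binv0 * p = p * binv0 := by
        calc binv0 * p = binv0 * p * (b * binv0) := by rw [h1, mul_one]
          _ = binv0 * (p * b) * binv0 := by noncomm_ring
          _ = binv0 * (b * p) * binv0 := by rw [hpb]
          _ = (binv0 * b) * (p * binv0) := by noncomm_ring
          _ = p * binv0 := by rw [h2, one_mul]
      calc p * binv0 * p = p * (binv0 * p) := mul_assoc _ _ _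
        _ = p * (p * binv0) := by rw [hbinvp]
        _ = b * binv0 := by rw [← mul_assoc, hpp]
        _ = 1 := h1
  set q := Ring.inverse p with hqdef
  have hpq : p * q = 1 := Ring.mul_inverse_cancel p hpu
  have hqp : q * p = 1 := Ring.inverse_mul_cancel p hpu
  have hq0 : 0 ≤ q := myinv_nonneg hp0 hpu
  have hqsa : star q = q := IsSelfAdjoint.of_nonneg hq0
  have hqu : IsUnit q := isUnit_ringInverse.mpr hpu
  have hpq1 : ∀ x : A, p * (q * x) = x := fun x => by rw [← mul_assoc, hpq, one_mul]
  have hqp1 : ∀ x : A, q * (p * x) = x := fun x => by rw [← mul_assoc, hqp, one_mul]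
  -- inverses of a and b
  set ainv := Ring.inverse a with hainvdef
  set binv := Ring.inverse b with hbinvdef
  have haainv : a * ainv = 1 := Ring.mul_inverse_cancel a ha'
  have hainva : ainv * a = 1 := Ring.inverse_mul_cancel a ha'
  have hainv0 : 0 ≤ ainv := myinv_nonneg ha ha'
  have hainvu : IsUnit ainv := isUnit_ringInverse.mpr ha'
  have haainv1 : ∀ x : A, a * (ainv * x) = x := fun x => by rw [← mul_assoc, haainv, one_mul]
  have hainva1 : ∀ x : A, ainv * (a * x) = x := fun x => by rw [← mul_assoc, hainva, one_mul]
  have hbinv0 : 0 ≤ binv := myinv_nonneg hb hb'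
  have hbinvqq : binv = q * q := by
    refine myinv_unique hb' ?_
    rw [← hpp]
    calc p * p * (q * q) = p * (p * (q * q)) := mul_assoc _ _ _
      _ = 1 := by rw [hpq1, hpq]
  -- c = q * a * q
  set c := q * (a * q) with hcdef
  have hc0 : 0 ≤ c := by
    have := star_left_conjugate_nonneg ha q
    rwa [hqsa, mul_assoc] at this
  have hcsa : star c = c := IsSelfAdjoint.of_nonneg hc0
  have hcu : IsUnit c := by
    have hceq : c = (q * a) * q := by rw [hcdef, mul_assoc]
    rw [hceq]
    exact (hqu.mul ha').mul hqu
  set cinv := Ring.inverse c with hcinvdef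
  have hcinv : cinv = p * (ainv * p) := by
    refine myinv_unique hcu ?_
    rw [hcdef]
    simp only [mul_assoc, hpq1, hqp1, haainv1, hainva1]
    rw [hqp]
  have hccinv : c * cinv = 1 := Ring.mul_inverse_cancel c hcu
  have hcinvc : cinv * c = 1 := Ring.inverse_mul_cancel c hcu
  have hccinv1 : ∀ x : A, c * (cinv * x) = x := fun x => by rw [← mul_assoc, hccinv, one_mul]
  have hcinvc1 : ∀ x : A, cinv * (c * x) = x := fun x => by rw [← mul_assoc, hcinvc, one_mul]
  -- m = (1-ν)•1 + ν•c
  set m := (1 - ν) • (1:A) + ν • c with hmdef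
  have hm0 : 0 ≤ m := add_nonneg (smul_nonneg hμ0.le zero_le_one) (smul_nonneg hν0.le hc0)
  have hμ1u : IsUnit ((1 - ν) • (1:A)) := by
    rw [← Algebra.algebraMap_eq_smul_one]
    exact (isUnit_iff_ne_zero.mpr hμne).map (algebraMap ℝ A)
  have hmu : IsUnit m := by
    refine CStarAlgebra.isUnit_of_le _ ?_ ⟨smul_nonneg hμ0.le zero_le_one, hμ1u⟩
    exact le_add_of_nonneg_right (smul_nonneg hν0.le hc0)
  set minv := Ring.inverse m with hminvdef
  have hminv0 : 0 ≤ minv := myinv_nonneg hm0 hmu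
  have hmminv : m * minv = 1 := Ring.mul_inverse_cancel m hmu
  have hminvm : minv * m = 1 := Ring.inverse_mul_cancel m hmu
  have hmminv1 : ∀ x : A, m * (minv * x) = x := fun x => by rw [← mul_assoc, hmminv, one_mul]
  have hminvm1 : ∀ x : A, minv * (m * x) = x := fun x => by rw [← mul_assoc, hminvm, one_mul]
  have hcm : Commute c m := by
    rw [hmdef]
    exact ((Commute.one_right c).smul_right (1 - ν)).add_right ((Commute.refl c).smul_right ν)
  have hcminv : Commute c minv := mycommute_inv hmu hcm
  have hncm : (1 - ν) • cinv + ν • (1:A) = cinv * m := by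
    rw [hmdef, mul_add, mul_smul_comm, mul_smul_comm, mul_one, hcinvc]
  -- S = (1-ν)•ainv + ν•binv
  set S := (1 - ν) • ainv + ν • binv with hSdef
  have hSu : IsUnit S := by
    have h1 : IsUnit ((1 - ν) • ainv) := by
      rw [Algebra.smul_def]
      exact ((isUnit_iff_ne_zero.mpr hμne).map (algebraMap ℝ A)).mul hainvu
    refine CStarAlgebra.isUnit_of_le _ ?_ ⟨smul_nonneg hμ0.le hainv0, h1⟩
    exact le_add_of_nonneg_right (smul_nonneg hν0.le hbinv0)
  have hSn : S = q * (((1 - ν) • cinv + ν • (1:A)) * q) := by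
    rw [hSdef, hcinv, hbinvqq]
    simp only [add_mul, smul_mul_assoc, mul_add, mul_smul_comm, one_mul]
    simp only [mul_assoc, hqp1, hpq1, hpq, mul_one]
  have hH : Ring.inverse S = p * (minv * (c * p)) := by
    refine myinv_unique hSu ?_
    rw [hSn, hncm]
    simp only [mul_assoc, hqp1, hpq1, hcinvc1, hmminv1, hminvm1, hccinv1, hqp]
  -- rewrite Cmean with real smuls
  have hC : Cmean ν a b = ((1 - ν) / ν) • b + (ν / (1 - ν)) • a - Ring.inverse S := by
    simp only [Cmean, Complex.coe_smul]
    rfl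
  set C := Cmean ν a b with hCdef
  -- E = q * (C * q)
  have hE : q * (C * q) = ((1 - ν) / ν) • (1:A) + (ν / (1 - ν)) • c - c * minv := by
    rw [hC, hH, ← hpp]
    simp only [mul_sub, sub_mul, mul_add, add_mul, mul_smul_comm, smul_mul_assoc, mul_assoc,
      hqp1, hpq1, hpq, hqp, mul_one]
    rw [← hcdef, hcminv.eq]
  -- key identity
  set s : ℝ := (1 - ν)^2 / ν^2 with hsdef
  set r := c - s • (1:A) with hrdef
  have hrsa : star r = r := by
    rw [hrdef, star_sub, hcsa, star_smul, star_one, star_trivial]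
  have hrm : Commute r m := by
    rw [hrdef]
    exact hcm.sub_left ((Commute.one_left m).smul_left s)
  have hkeym : (q * (C * q) - ((1 - ν) • (1:A) + ν • c)) * m
      = ((ν^3/(1 - ν)) • (r * (minv * r))) * m := by
    have hrhs : ((ν^3/(1 - ν)) • (r * (minv * r))) * m = (ν^3/(1 - ν)) • (r * r) := by
      rw [smul_mul_assoc]
      congr 1
      calc r * (minv * r) * m = r * (minv * (r * m)) := by simp only [mul_assoc]
        _ = r * (minv * (m * r)) := by rw [hrm.eq]
        _ = r * r := by rw [hminvm1]
    rw [hrhs, hE]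
    have key : ∀ X Y Z m' : A, (X - Z - Y) * m' = (X - Y) * m' - Z * m' := by
      intro X Y Z m'; noncomm_ring
    rw [key]
    have hZ : c * minv * m = c := by rw [mul_assoc, hminvm, mul_one]
    rw [hZ, hmdef, hrdef, hsdef]
    simp only [sub_mul, add_mul, mul_add, mul_sub, smul_mul_assoc, mul_smul_comm, smul_smul,
      one_mul, mul_one, smul_sub, sub_smul, smul_add]
    match_scalars <;> field_simp <;> ring
  have hpos : 0 ≤ (ν^3/(1 - ν)) • (r * (minv * r)) := by
    refine smul_nonneg (div_nonneg (pow_nonneg hν0.le 3) hμ0.le) ?_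
    have := star_left_conjugate_nonneg hminv0 r
    rwa [hrsa, mul_assoc] at this
  have hcancel : q * (C * q) - ((1 - ν) • (1:A) + ν • c) = (ν^3/(1 - ν)) • (r * (minv * r)) := by
    have h := congrArg (· * minv) hkeym
    simpa only [mul_assoc, hmminv, mul_one] using h
  have hle : (1 - ν) • (1:A) + ν • c ≤ q * (C * q) := by
    rw [← sub_nonneg, hcancel]
    exact hpos
  have hyC : (1 - ν) • b + ν • a ≤ C := by
    have h := star_left_conjugate_le_conjugate hle p
    rw [hpsa] at h
    have h1 : p * ((1 - ν) • (1:A) + ν • c) * p = (1 - ν) • b + ν • a := by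
      rw [hcdef]
      simp only [add_mul, mul_add, smul_mul_assoc, mul_smul_comm, one_mul, mul_one, mul_assoc,
        hpq1, hqp1, hpq, hqp]
      rw [hpp]
    have h2 : p * (q * (C * q)) * p = C := by
      simp only [mul_assoc, hpq1, hqp, mul_one]
    rwa [h1, h2] at h
  set y := (1 - ν) • b + ν • a with hydef
  have hy0 : 0 ≤ y := add_nonneg (smul_nonneg hμ0.le hb) (smul_nonneg hν0.le ha)
  have hyu : IsUnit y := by
    have h1 : IsUnit ((1 - ν) • b) := by
      rw [Algebra.smul_def]
      exact ((isUnit_iff_ne_zero.mpr hμne).map (algebraMap ℝ A)).mul hb'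
    exact CStarAlgebra.isUnit_of_le _
      (le_add_of_nonneg_right (smul_nonneg hν0.le ha)) ⟨smul_nonneg hμ0.le hb, h1⟩
  have hC0 : 0 ≤ C := hy0.trans hyC
  have hCu : IsUnit C := CStarAlgebra.isUnit_of_le y hyC ⟨hy0, hyu⟩
  set Cinv := Ring.inverse C with hCinvdef
  have hCinv0 : 0 ≤ Cinv := myinv_nonneg hC0 hCu
  have hCinvu : IsUnit Cinv := isUnit_ringInverse.mpr hCu
  set w := CFC.sqrt Cinv with hwdef
  have hw0 : 0 ≤ w := CFC.sqrt_nonneg _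
  have hwsa : star w = w := IsSelfAdjoint.of_nonneg hw0
  have hww : w * w = Cinv := CFC.sqrt_mul_sqrt_self Cinv hCinv0
  have hwCinv : Commute w Cinv := by
    rw [← hww]; exact (Commute.refl w).mul_right (Commute.refl w)
  have hCC : Ring.inverse Cinv = C := myinv_unique hCinvu (Ring.inverse_mul_cancel C hCu)
  have hwC : Commute w C := by
    rw [← hCC]; exact mycommute_inv hCinvu hwCinv
  have hwCw : w * C * w = 1 := by
    rw [mul_assoc, ← hwC.eq, ← mul_assoc, hww]
    exact Ring.inverse_mul_cancel C hCu
  set v := CFC.sqrt y with hvdef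
  have hv0 : 0 ≤ v := CFC.sqrt_nonneg _
  have hvsa : star v = v := IsSelfAdjoint.of_nonneg hv0
  have hvv : v * v = y := CFC.sqrt_mul_sqrt_self y hy0
  refine ⟨w * v, ?_, ?_⟩
  · have h1 : (w * v) * star (w * v) = w * y * w := by
      rw [star_mul, hvsa, hwsa]
      calc w * v * (v * w) = w * (v * v) * w := by noncomm_ring
        _ = w * y * w := by rw [hvv]
    have h2 : w * y * w ≤ 1 := by
      have h3 := star_left_conjugate_le_conjugate hyC w
      rw [hwsa] at h3
      calc w * y * w ≤ w * C * w := h3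
        _ = 1 := hwCw
    have h3 : (0:A) ≤ (w * v) * star (w * v) := mul_star_self_nonneg _
    have h4 : ‖(w * v) * star (w * v)‖ ≤ 1 :=
      (CStarAlgebra.norm_le_one_iff_of_nonneg _ h3).mpr (h1 ▸ h2)
    rw [CStarRing.norm_self_mul_star] at h4
    nlinarith [norm_nonneg (w * v)]
  · rw [Complex.coe_smul, Complex.coe_smul, ← hydef]
    have hfin : star (w * v) * C * (w * v) = y := by
      rw [star_mul, hvsa, hwsa]
      calc v * w * C * (w * v) = v * (w * C * w) * v := by noncomm_ring
        _ = v * v := by rw [hwCw, mul_one]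
        _ = y := hvv
    exact hfin.symm
end

section
/- Let A be a unital C*-algebra with unit e, ν ∈ (0,1), and a, b positive definite elements. Then C_ν(a,b) ≤ (1−ν)ν⁻¹b + ν(1−ν)⁻¹a − H_ν(‖a⁻¹‖⁻¹, ‖b⁻¹‖⁻¹)·e, where H_ν(α,β) = ((1−ν)α⁻¹ + νβ⁻¹)⁻¹ is the scalar weighted harmonic mean. -/
theorem stmt18 {A : Type*} [CStarAlgebra A] [PartialOrder A] [StarOrderedRing A]
    (ν : ℝ) (hν : ν ∈ Set.Ioo (0:ℝ) 1) (a b : A)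
    (ha : 0 ≤ a) (ha' : IsUnit a) (hb : 0 ≤ b) (hb' : IsUnit b) :
    Cmean ν a b ≤ (((1 - ν) / ν : ℝ) : ℂ) • b + ((ν / (1 - ν) : ℝ) : ℂ) • a -
      ((((1 - ν) * (‖Ring.inverse a‖⁻¹)⁻¹ + ν * (‖Ring.inverse b‖⁻¹)⁻¹)⁻¹ : ℝ) : ℂ) •
        (1 : A) := by
  obtain ⟨hν0, hν1⟩ := hν
  have hν1' : (0:ℝ) < 1 - ν := by linarith
  nontriviality A
  rw [Cmean]
  refine sub_le_sub_left ?_ _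
  lift a to Aˣ using ha'
  lift b to Aˣ using hb'
  rw [Ring.inverse_unit, Ring.inverse_unit]
  simp only [Complex.coe_smul, inv_inv]
  set ia : A := ↑a⁻¹ with hia_def
  set ib : A := ↑b⁻¹ with hib_def
  have hia : (0:A) ≤ ia := CFC.inv_nonneg_of_nonneg a ha
  have hib : (0:A) ≤ ib := CFC.inv_nonneg_of_nonneg b hb
  have hα : (0:ℝ) < ‖ia‖ := norm_pos_iff.mpr (a⁻¹).isUnit.ne_zero
  have hβ : (0:ℝ) < ‖ib‖ := norm_pos_iff.mpr (b⁻¹).isUnit.ne_zero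
  set c : A := (1-ν) • ia + ν • ib with hc_def
  have hc0 : (0:A) ≤ c := add_nonneg (smul_nonneg hν1'.le hia) (smul_nonneg hν0.le hib)
  have h1u : IsUnit ((1-ν) • ia) := by
    have := (isUnit_smul_iff (Units.mk0 (1-ν) hν1'.ne') ia).mpr (a⁻¹).isUnit
    simpa [Units.smul_def] using this
  have hcu : IsUnit c :=
    CStarAlgebra.isUnit_of_le _
      (le_add_of_nonneg_right (smul_nonneg hν0.le hib))
      (IsStrictlyPositive.iff_of_unital.mpr ⟨smul_nonneg hν1'.le hia, h1u⟩)
  set t : ℝ := (1-ν) * ‖ia‖ + ν * ‖ib‖ with ht_def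
  have ht : 0 < t := by positivity
  have hiale : ia ≤ ‖ia‖ • 1 := by
    simpa [Algebra.algebraMap_eq_smul_one] using
      IsSelfAdjoint.le_algebraMap_norm_self (.of_nonneg hia)
  have hible : ib ≤ ‖ib‖ • 1 := by
    simpa [Algebra.algebraMap_eq_smul_one] using
      IsSelfAdjoint.le_algebraMap_norm_self (.of_nonneg hib)
  have hct : c ≤ t • 1 := by
    calc c ≤ (1-ν) • (‖ia‖ • (1:A)) + ν • (‖ib‖ • (1:A)) :=
          add_le_add (smul_le_smul_of_nonneg_left hiale hν1'.le)
            (smul_le_smul_of_nonneg_left hible hν0.le)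
      _ = t • 1 := by rw [smul_smul, smul_smul, ← add_smul]
  obtain ⟨uc, huc⟩ := hcu
  have hut : ((t • (1:A)) * (t⁻¹ • (1:A)) = 1) := by
    rw [smul_mul_smul_comm]; simp [mul_inv_cancel₀ ht.ne']
  have htu : ((t⁻¹ • (1:A)) * (t • (1:A)) = 1) := by
    rw [smul_mul_smul_comm]; simp [inv_mul_cancel₀ ht.ne']
  set ut : Aˣ := ⟨t • 1, t⁻¹ • 1, hut, htu⟩ with hut_def
  have key : (↑ut⁻¹ : A) ≤ ↑uc⁻¹ :=
    CStarAlgebra.inv_le_inv (a := uc) (huc ▸ hc0) (by rw [huc]; exact hct)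
  rw [← huc, Ring.inverse_unit]
  exact key
end
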